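/- arXiv:2303.05472 — 8 statements merged into one kernel-verified Lean document; each statement's English description precedes it below -/
import Mathlib

section
/- Let R be a commutative local ring with maximal ideal m, let M be a free R-module of rank n ≥ 1, and let f be an R-linear endomorphism of M whose characteristic polynomial factors as P_f(X) = ∏_{i=1}^n (X − λ_i) in R[X], where λ_1, …, λ_n ∈ R have pairwise distinct images in the residue field R/m. Then each eigenspace ker(f − λ_i) is a free R-module of rank 1, M is the internal direct sum ker(f − λ_1) ⊕ ⋯ ⊕ ker(f − λ_n), and for any choice of generators v_i of ker(f − λ_i) (1 ≤ i ≤ n), the family (v_1, …, v_n) is a basis of M. -/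
set_option maxHeartbeats 1000000

open Polynomial

/-- Over a commutative local ring `R`, let `f` be an endomorphism of a
free module `M` of rank `n ≥ 1` whose characteristic polynomial splits as
`∏ (X - λᵢ)` with the `λᵢ` pairwise distinct modulo the maximal ideal. Then each
eigenspace `ker (f - λᵢ)` is free of rank one, `M` is the internal direct sum of the
eigenspaces, and any choice of generators of the eigenspaces is a basis of `M`. -/
theorem eigenbasis_of_charpoly_split_local {R M : Type*} [CommRing R] [IsLocalRing R]
    [AddCommGroup M] [Module R M] [Module.Free R M] [Module.Finite R M]
    (n : ℕ) (hn : 1 ≤ n) (hrank : Module.finrank R M = n)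
    (f : Module.End R M) (lam : Fin n → R)
    (hchar : LinearMap.charpoly f = ∏ i : Fin n, (Polynomial.X - Polynomial.C (lam i)))
    (hdist : ∀ i j, i ≠ j → lam i - lam j ∉ IsLocalRing.maximalIdeal R) :
    (∀ i, Nonempty
        ((LinearMap.ker (f - lam i • (1 : Module.End R M))) ≃ₗ[R] R)) ∧
    DirectSum.IsInternal
      (fun i : Fin n => LinearMap.ker (f - lam i • (1 : Module.End R M))) ∧
    ∀ v : Fin n → M,
      (∀ i, Submodule.span R {v i} = LinearMap.ker (f - lam i • (1 : Module.End R M))) →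
      ∃ b : Module.Basis (Fin n) R M, ∀ i, b i = v i := by
  classical
  have haev : ∀ a : R, f - a • (1 : Module.End R M) = Polynomial.aeval f (X - C a) := by
    intro a
    rw [map_sub, Polynomial.aeval_X, Polynomial.aeval_C, Module.algebraMap_end_eq_smul_id]
    rfl
  have hKeq : ∀ a : R, LinearMap.ker (f - a • (1 : Module.End R M)) =
      LinearMap.ker (Polynomial.aeval f (X - C a)) := fun a => by rw [haev]
  have hunit : ∀ i j : Fin n, i ≠ j → IsUnit (lam i - lam j) := by
    intro i j hij
    by_contra h
    exact hdist i j hij (by rwa [IsLocalRing.mem_maximalIdeal, mem_nonunits_iff])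
  have hcop : ∀ i j : Fin n, i ≠ j → IsCoprime (X - C (lam i)) (X - C (lam j)) :=
    fun i j hij => Polynomial.isCoprime_X_sub_C_of_isUnit_sub (hunit i j hij)
  -- kernels of products
  have hkerprod : ∀ s : Finset (Fin n),
      LinearMap.ker (Polynomial.aeval f (∏ j ∈ s, (X - C (lam j)))) =
        ⨆ j ∈ s, LinearMap.ker (Polynomial.aeval f (X - C (lam j))) := by
    intro s
    induction s using Finset.induction_on with
    | empty => simp [Module.End.one_eq_id, LinearMap.ker_id]
    | @insert a s ha ih =>
      rw [Finset.prod_insert ha,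
        ← Polynomial.sup_ker_aeval_eq_ker_aeval_mul_of_coprime f
          (IsCoprime.prod_right fun j hj => hcop a j (by rintro rfl; exact ha hj)),
        ih]
      exact (Finset.iSup_insert a s fun j => LinearMap.ker (Polynomial.aeval f (X - C (lam j)))).symm
  -- the sup of all the kernels is everything (Cayley-Hamilton)
  have hsup : (⨆ i, LinearMap.ker (Polynomial.aeval f (X - C (lam i)))) = ⊤ := by
    have h0 : Polynomial.aeval f (∏ i : Fin n, (X - C (lam i))) = 0 := by
      rw [← hchar]; exact LinearMap.aeval_self_charpoly f
    have h1 := hkerprod Finset.univ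
    rw [h0, LinearMap.ker_zero] at h1
    simpa using h1.symm
  -- independence
  have hindep : iSupIndep (fun i : Fin n =>
      LinearMap.ker (Polynomial.aeval f (X - C (lam i)))) := by
    intro i
    have h1 : (⨆ j ∈ Finset.univ.erase i,
        LinearMap.ker (Polynomial.aeval f (X - C (lam j)))) =
        ⨆ (j) (_ : j ≠ i), LinearMap.ker (Polynomial.aeval f (X - C (lam j))) := by
      simp [Finset.mem_erase]
    rw [← h1, ← hkerprod]
    exact Polynomial.disjoint_ker_aeval_of_isCoprime f
      (IsCoprime.prod_right fun j hj => hcop i j (Ne.symm (Finset.mem_erase.mp hj).1))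
  have hInt : DirectSum.IsInternal (fun i : Fin n =>
      LinearMap.ker (Polynomial.aeval f (X - C (lam i)))) :=
    DirectSum.isInternal_submodule_of_iSupIndep_of_iSup_eq_top hindep hsup
  -- complements, hence finite, projective, free
  have hcompl : ∀ i, IsCompl (LinearMap.ker (Polynomial.aeval f (X - C (lam i))))
      (⨆ (j) (_ : j ≠ i), LinearMap.ker (Polynomial.aeval f (X - C (lam j)))) := by
    intro i
    refine ⟨hindep i, codisjoint_iff_le_sup.mpr ?_⟩
    rw [← hsup]
    refine iSup_le fun j => ?_
    rcases eq_or_ne j i with rfl | h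
    · exact le_sup_left
    · exact le_trans (le_iSup₂ (f := fun j (_ : j ≠ i) =>
        LinearMap.ker (Polynomial.aeval f (X - C (lam j)))) j h) le_sup_right
  haveI hfin : ∀ i, Module.Finite R
      ↥(LinearMap.ker (Polynomial.aeval f (X - C (lam i)))) := by
    intro i
    exact Module.Finite.of_surjective
      (Submodule.projectionOnto _ _ (hcompl i)) (fun x => ⟨x, Submodule.projectionOnto_apply_left (hcompl i) x⟩)
  haveI hproj : ∀ i, Module.Projective R
      ↥(LinearMap.ker (Polynomial.aeval f (X - C (lam i)))) := by
    intro i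
    exact Module.Projective.of_split
      (LinearMap.ker (Polynomial.aeval f (X - C (lam i)))).subtype
      (Submodule.projectionOnto _ _ (hcompl i)) (by ext x; exact congrArg Subtype.val (Submodule.projectionOnto_apply_left (hcompl i) x))
  haveI hfp : ∀ i, Module.FinitePresentation R
      ↥(LinearMap.ker (Polynomial.aeval f (X - C (lam i)))) :=
    fun i => Module.finitePresentation_of_projective R _
  haveI hfree : ∀ i, Module.Free R
      ↥(LinearMap.ker (Polynomial.aeval f (X - C (lam i)))) :=
    fun i => Module.free_of_flat_of_isLocalRing
  -- each kernel is nonzero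
  have hne : ∀ i, LinearMap.ker (Polynomial.aeval f (X - C (lam i))) ≠ ⊥ := by
    intro i hbot
    have hgsurj : Function.Surjective (Polynomial.aeval f (X - C (lam i))) := by
      rw [← LinearMap.range_eq_top, ← top_le_iff, ← hsup]
      refine iSup_le fun j x hx => ?_
      rcases eq_or_ne j i with rfl | h
      · rw [hbot, Submodule.mem_bot] at hx
        rw [hx]
        exact Submodule.zero_mem _
      · have hfx : f x = lam j • x := by
          have h2 : (f - lam j • (1 : Module.End R M)) x = 0 :=
            (DFunLike.congr_fun (haev (lam j)) x).trans (LinearMap.mem_ker.mp hx)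
          rw [LinearMap.sub_apply, LinearMap.smul_apply, Module.End.one_apply,
            sub_eq_zero] at h2
          exact h2
        obtain ⟨u, hu_eq⟩ := hunit j i h
        refine ⟨(↑u⁻¹ : R) • x, ?_⟩
        have hgx : (Polynomial.aeval f (X - C (lam i))) x = (lam j - lam i) • x := by
          rw [← DFunLike.congr_fun (haev (lam i)) x,
            LinearMap.sub_apply, LinearMap.smul_apply, Module.End.one_apply, hfx, sub_smul]
        rw [map_smul, hgx, smul_smul, ← hu_eq, Units.inv_mul, one_smul]
    have hbij : Function.Bijective ⇑(Polynomial.aeval f (X - C (lam i))) :=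
      ⟨OrzechProperty.injective_of_surjective_endomorphism _ hgsurj, hgsurj⟩
    have hgu : IsUnit (Polynomial.aeval f (X - C (lam i))) :=
      (Module.End.isUnit_iff _).mpr hbij
    have hdu : IsUnit (LinearMap.det
        ((Polynomial.aeval f (X - C (lam i)) : Module.End R M) : M →ₗ[R] M)) :=
      hgu.map LinearMap.det
    -- now compute the determinant via the characteristic polynomial
    set b := Module.Free.chooseBasis R M with hb
    set A := LinearMap.toMatrix b b f with hA
    have e1 : Polynomial.eval (lam i) (Matrix.charpoly A) = 0 := by
      rw [hA, LinearMap.charpoly_toMatrix, hchar, Polynomial.eval_prod]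
      exact Finset.prod_eq_zero (Finset.mem_univ i) (by simp)
    have e2 : Polynomial.eval (lam i) (Matrix.charpoly A) =
        Matrix.det ((Matrix.charmatrix A).map (Polynomial.eval (lam i))) := by
      rw [Matrix.charpoly]
      rw [show Polynomial.eval (lam i) = ⇑(Polynomial.evalRingHom (lam i)) from rfl,
        RingHom.map_det]
      rfl
    have e3 : (Matrix.charmatrix A).map (Polynomial.eval (lam i)) =
        lam i • (1 : Matrix _ _ R) - A := by
      ext i' j'
      by_cases h : i' = j'
      · subst h
        simp [Matrix.charmatrix_apply_eq, Matrix.one_apply]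
      · simp [Matrix.charmatrix_apply_ne _ _ _ h, Matrix.one_apply, h]
    have e4 : Matrix.det (lam i • (1 : Matrix _ _ R) - A) =
        (-1) ^ (Fintype.card (Module.Free.ChooseBasisIndex R M)) *
          Matrix.det (A - lam i • 1) := by
      rw [← Matrix.det_neg, neg_sub]
    have e5 : LinearMap.toMatrix b b
        ((Polynomial.aeval f (X - C (lam i)) : Module.End R M) : M →ₗ[R] M) =
        A - lam i • 1 := by
      rw [show Polynomial.aeval f (X - C (lam i)) = f - lam i • 1 from (haev _).symm,
        map_sub, map_smul, hA]
      congr 1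
      ext i' j'
      simp [LinearMap.toMatrix_apply, Matrix.one_apply]
    have e6 : Matrix.det (A - lam i • 1) = LinearMap.det
        ((Polynomial.aeval f (X - C (lam i)) : Module.End R M) : M →ₗ[R] M) := by
      rw [← e5, LinearMap.det_toMatrix]
    have : IsUnit (0 : R) := by
      rw [← e1, e2, e3, e4, e6]
      exact (isUnit_one.neg.pow _).mul hdu
    exact not_isUnit_zero this
  -- finrank computations
  have hsumrank : (∑ i, Module.finrank R
      ↥(LinearMap.ker (Polynomial.aeval f (X - C (lam i))))) = n := by
    have e : (DirectSum (Fin n) fun i =>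
        ↥(LinearMap.ker (Polynomial.aeval f (X - C (lam i))))) ≃ₗ[R] M :=
      LinearEquiv.ofBijective (DirectSum.coeLinearMap _) hInt
    rw [← Module.finrank_directSum, e.finrank_eq, hrank]
  have hge : ∀ i, 1 ≤ Module.finrank R
      ↥(LinearMap.ker (Polynomial.aeval f (X - C (lam i)))) := by
    intro i
    by_contra hlt
    have h0 : Module.finrank R
        ↥(LinearMap.ker (Polynomial.aeval f (X - C (lam i)))) = 0 := by omega
    haveI : IsEmpty (Module.Free.ChooseBasisIndex R
        ↥(LinearMap.ker (Polynomial.aeval f (X - C (lam i))))) := by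
      rw [← Fintype.card_eq_zero_iff, ← Module.finrank_eq_card_chooseBasisIndex, h0]
    have hrepr := Module.Free.chooseBasis R
      ↥(LinearMap.ker (Polynomial.aeval f (X - C (lam i))))
    refine hne i (Submodule.eq_bot_iff _ |>.mpr fun x hx => ?_)
    have : (⟨x, hx⟩ : ↥(LinearMap.ker (Polynomial.aeval f (X - C (lam i))))) = 0 := by
      apply hrepr.repr.injective
      exact Subsingleton.elim _ _
    simpa using congrArg Subtype.val this
  have hone : ∀ i, Module.finrank R
      ↥(LinearMap.ker (Polynomial.aeval f (X - C (lam i)))) = 1 := by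
    have hsum1 : (∑ _i : Fin n, 1) = ∑ i, Module.finrank R
        ↥(LinearMap.ker (Polynomial.aeval f (X - C (lam i)))) := by
      rw [hsumrank]; simp
    intro i
    exact ((Finset.sum_eq_sum_iff_of_le fun j _ => hge j).mp hsum1 i
      (Finset.mem_univ i)).symm
  -- part 1
  have huniq : ∀ i, Unique (Module.Free.ChooseBasisIndex R
      ↥(LinearMap.ker (Polynomial.aeval f (X - C (lam i))))) := by
    intro i
    refine (Fintype.card_eq_one_iff_nonempty_unique.mp ?_).some
    rw [← Module.finrank_eq_card_chooseBasisIndex, hone i]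
  have hequiv : ∀ i, Nonempty
      ((LinearMap.ker (Polynomial.aeval f (X - C (lam i)))) ≃ₗ[R] R) := by
    intro i
    haveI := huniq i
    exact ⟨(Module.Free.chooseBasis R _).repr.trans
      (Finsupp.LinearEquiv.finsuppUnique R R _)⟩
  refine ⟨?_, ?_, ?_⟩
  · intro i
    rw [hKeq]
    exact hequiv i
  · show DirectSum.IsInternal fun i : Fin n =>
      LinearMap.ker (f - lam i • (1 : Module.End R M))
    simp only [hKeq]
    exact hInt
  -- part 3
  intro v hv
  simp only [hKeq] at hv
  have hw : ∀ i, v i ∈ LinearMap.ker (Polynomial.aeval f (X - C (lam i))) :=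
    fun i => (hv i) ▸ Submodule.mem_span_singleton_self (v i)
  set w : ∀ i, ↥(LinearMap.ker (Polynomial.aeval f (X - C (lam i)))) :=
    fun i => ⟨v i, hw i⟩ with hwdef
  have hφsurj : ∀ i, Function.Surjective
      (LinearMap.toSpanSingleton R _ (w i)) := by
    intro i x
    have hx : (x : M) ∈ Submodule.span R {v i} := by rw [hv i]; exact x.2
    obtain ⟨r, hr⟩ := Submodule.mem_span_singleton.mp hx
    exact ⟨r, Subtype.ext (by simpa [LinearMap.toSpanSingleton_apply] using hr)⟩
  have hφinj : ∀ i, Function.Injective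
      (LinearMap.toSpanSingleton R _ (w i)) := by
    intro i
    obtain ⟨e⟩ := hequiv i
    have hcs : Function.Surjective
        (e.toLinearMap ∘ₗ LinearMap.toSpanSingleton R _ (w i)) :=
      e.surjective.comp (hφsurj i)
    have hinj := OrzechProperty.injective_of_surjective_endomorphism _ hcs
    intro a b hab
    exact hinj (by simp [LinearMap.comp_apply, hab])
  set φe : ∀ i, R ≃ₗ[R] ↥(LinearMap.ker (Polynomial.aeval f (X - C (lam i)))) :=
    fun i => LinearEquiv.ofBijective _ ⟨hφinj i, hφsurj i⟩ with hφe
  set bi : ∀ i, Module.Basis Unit R ↥(LinearMap.ker (Polynomial.aeval f (X - C (lam i)))) :=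
    fun i => Module.Basis.ofRepr ((φe i).symm.trans
      (Finsupp.LinearEquiv.finsuppUnique R R Unit).symm) with hbidef
  have hbi : ∀ i (j : Unit), ((bi i j : ↥(LinearMap.ker
      (Polynomial.aeval f (X - C (lam i))))) : M) = v i := by
    intro i j
    have : bi i j = w i := by
      simp only [hbidef, Module.Basis.coe_ofRepr, LinearEquiv.trans_symm, LinearEquiv.symm_symm,
        LinearEquiv.trans_apply]
      simp [hφe, LinearEquiv.ofBijective_apply, Finsupp.LinearEquiv.finsuppUnique,
        LinearMap.toSpanSingleton_apply]
      exact one_smul R (w i)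
    rw [this]
  refine ⟨(hInt.collectedBasis bi).reindex (Equiv.sigmaPUnit (Fin n)), fun i => ?_⟩
  rw [Module.Basis.reindex_apply]
  rw [show ⇑(hInt.collectedBasis bi) = fun a : Σ _i : Fin n, Unit => ((bi a.1 a.2 :
    ↥(LinearMap.ker (Polynomial.aeval f (X - C (lam a.1))))) : M) from
    hInt.collectedBasis_coe bi]
  exact hbi _ _
end

section
/- Let R be a commutative local ring with maximal ideal m, let M be a free R-module of rank n ≥ 1, and let f be an R-linear endomorphism of M whose characteristic polynomial factors as P_f(X) = ∏_{i=1}^n (X − λ_i) in R[X], where λ_1, …, λ_n ∈ R have pairwise distinct images in the residue field R/m. Then there exists a basis (v_1, …, v_n) of M such that f(v_i) = λ_i · v_i for all 1 ≤ i ≤ n. -/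
open Polynomial Finset

section Aux

variable {R : Type*} [CommRing R]

/-- If a polynomial vanishes at points whose pairwise differences are units,
then the product of the corresponding linear factors divides it. -/
private lemma aux_prod_X_sub_C_dvd {ι : Type*} [DecidableEq ι]
    (lam : ι → R) (s : Finset ι) :
    ∀ q : R[X], (∀ i ∈ s, ∀ j ∈ s, i ≠ j → IsUnit (lam i - lam j)) →
    (∀ i ∈ s, q.eval (lam i) = 0) → (∏ i ∈ s, (X - C (lam i))) ∣ q := by
  classical
  induction s using Finset.induction_on with
  | empty => intro q _ _; simpa using dvd_refl q
  | @insert a s ha ih =>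
    intro q hunit hq
    have hqa : (X - C (lam a)) ∣ q :=
      dvd_iff_isRoot.mpr (hq a (Finset.mem_insert_self a s))
    obtain ⟨q', rfl⟩ := hqa
    rw [Finset.prod_insert ha]
    refine mul_dvd_mul_left _ (ih q'
      (fun i hi j hj hij => hunit i (Finset.mem_insert_of_mem hi)
        j (Finset.mem_insert_of_mem hj) hij) ?_)
    intro i hi
    have hne : i ≠ a := fun h => ha (h ▸ hi)
    have h0 := hq i (Finset.mem_insert_of_mem hi)
    rw [eval_mul, eval_sub, eval_X, eval_C] at h0
    exact ((hunit i (Finset.mem_insert_of_mem hi) a (Finset.mem_insert_self a s)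
      hne).mul_right_eq_zero).mp h0

private lemma aux_aeval_prod_mulVec {ι m : Type*} [Fintype m] [DecidableEq m]
    (A : Matrix m m R) (v : m → R) (μ : R) (hv : A.mulVec v = μ • v)
    (lam : ι → R) (s : Finset ι) :
    (Polynomial.aeval A (∏ j ∈ s, (X - C (lam j)))).mulVec v
      = (∏ j ∈ s, (μ - lam j)) • v := by
  classical
  induction s using Finset.induction_on with
  | empty => simp
  | @insert a s ha ih =>
    rw [Finset.prod_insert ha, Finset.prod_insert ha, map_mul, ← Matrix.mulVec_mulVec, ih,
      Matrix.mulVec_smul, map_sub, aeval_X, aeval_C, Matrix.sub_mulVec, hv,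
      Algebra.algebraMap_eq_smul_one, Matrix.smul_mulVec, Matrix.one_mulVec,
      ← sub_smul, smul_smul, mul_comm]

private lemma aux_exists_eigen {K : Type*} [Field K] {m : Type*} [Fintype m] [DecidableEq m]
    (A : Matrix m m K) (μ : K) (hroot : A.charpoly.eval μ = 0) :
    ∃ v : m → K, v ≠ 0 ∧ A.mulVec v = μ • v := by
  have hsc : Matrix.scalar m μ = μ • (1 : Matrix m m K) := by
    ext i j
    by_cases h : i = j <;> simp [Matrix.scalar_apply, Matrix.one_apply, h]
  have hdet : (μ • (1 : Matrix m m K) - A).det = 0 := by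
    have h := _root_.eval_det (Matrix.charmatrix A) μ
    rw [Matrix.matPolyEquiv_charmatrix, eval_sub, eval_X, eval_C, hsc] at h
    rw [← h]
    exact hroot
  obtain ⟨v, hv0, hv⟩ := Matrix.exists_mulVec_eq_zero_iff.mpr hdet
  refine ⟨v, hv0, ?_⟩
  rw [Matrix.sub_mulVec, Matrix.smul_mulVec, Matrix.one_mulVec, sub_eq_zero] at hv
  exact hv.symm

end Aux

/-- Over a commutative local ring `R`, an endomorphism of a free module
of rank `n ≥ 1` whose characteristic polynomial splits as `∏ (X - λᵢ)` with the `λᵢ`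
pairwise distinct modulo the maximal ideal is diagonalisable: there is a basis
`(v₁, …, vₙ)` of `M` with `f vᵢ = λᵢ • vᵢ`. -/
theorem exists_eigenbasis_of_charpoly_split_local {R M : Type*} [CommRing R] [IsLocalRing R]
    [AddCommGroup M] [Module R M] [Module.Free R M] [Module.Finite R M]
    (n : ℕ) (hn : 1 ≤ n) (hrank : Module.finrank R M = n)
    (f : Module.End R M) (lam : Fin n → R)
    (hchar : LinearMap.charpoly f = ∏ i : Fin n, (Polynomial.X - Polynomial.C (lam i)))
    (hdist : ∀ i j, i ≠ j → lam i - lam j ∉ IsLocalRing.maximalIdeal R) :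
    ∃ b : Module.Basis (Fin n) R M, ∀ i, f (b i) = lam i • b i := by
  classical
  set P : R[X] := ∏ i : Fin n, (X - C (lam i)) with hPdef
  have hunit : ∀ i j : Fin n, i ≠ j → IsUnit (lam i - lam j) :=
    fun i j h => IsLocalRing.notMem_maximalIdeal.mp (hdist i j h)
  have haevalP : Polynomial.aeval f P = 0 := by
    rw [← hchar]; exact LinearMap.aeval_self_charpoly f
  have haeval_dvd : ∀ q : R[X], P ∣ q → Polynomial.aeval f q = 0 := by
    rintro q ⟨t, rfl⟩
    rw [map_mul, haevalP, zero_mul]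
  -- the product of differences is a unit
  have hd : ∀ i : Fin n, IsUnit (∏ j ∈ Finset.univ.erase i, (lam i - lam j)) := by
    intro i
    refine Finset.prod_induction _ IsUnit (fun a b => IsUnit.mul) isUnit_one ?_
    intro j hj
    exact hunit i j (fun h => (Finset.mem_erase.mp hj).1 h.symm)
  -- inverse constants
  set c : Fin n → R := fun i => ((hd i).unit⁻¹ : Rˣ) with hcdef
  have hc : ∀ i, c i * ∏ j ∈ Finset.univ.erase i, (lam i - lam j) = 1 := by
    intro i
    have := (hd i).unit.inv_mul
    rwa [IsUnit.unit_spec] at this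
  -- Lagrange-type polynomials
  set L : Fin n → R[X] := fun i => C (c i) * ∏ j ∈ Finset.univ.erase i, (X - C (lam j))
    with hLdef
  have hevalL_self : ∀ i, (L i).eval (lam i) = 1 := by
    intro i
    rw [hLdef]
    simp only [eval_mul, eval_C, eval_prod, eval_sub, eval_X]
    exact hc i
  have hevalL_ne : ∀ i k, i ≠ k → (L i).eval (lam k) = 0 := by
    intro i k hik
    rw [hLdef]
    simp only [eval_mul, eval_C, eval_prod, eval_sub, eval_X]
    rw [Finset.prod_eq_zero (Finset.mem_erase.mpr ⟨fun h => hik h.symm, Finset.mem_univ k⟩)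
      (sub_self (lam k)), mul_zero]
  -- the partition of unity identity : ∑ L i = 1
  have hLsum : ∑ i, L i = 1 := by
    have hroots : ∀ k : Fin n, ((∑ i, L i) - 1).eval (lam k) = 0 := by
      intro k
      rw [eval_sub, eval_one, eval_finset_sum,
        Finset.sum_eq_single k (fun i _ hik => hevalL_ne i k hik) (by simp),
        hevalL_self, sub_self]
    have hdvd : P ∣ (∑ i, L i) - 1 :=
      aux_prod_X_sub_C_dvd lam Finset.univ _ (fun i _ j _ hij => hunit i j hij)
        (fun i _ => hroots i)
    have hQ0 : (∑ i, L i) - 1 = 0 := by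
      by_contra h0
      obtain ⟨t, ht⟩ := hdvd
      have htne : t ≠ 0 := fun h => h0 (by rw [ht, h, mul_zero])
      have hmonic : P.Monic := monic_prod_of_monic _ _ (fun i _ => monic_X_sub_C _)
      have hdegP : P.natDegree = n := by
        rw [hPdef, natDegree_prod_of_monic _ _ (fun i _ => monic_X_sub_C _)]
        simp [natDegree_X_sub_C]
      have h1 : ((∑ i, L i) - 1).natDegree = n + t.natDegree := by
        rw [ht, natDegree_mul' (by
          rw [hmonic.leadingCoeff, one_mul]; exact leadingCoeff_ne_zero.mpr htne), hdegP]
      have h2 : ((∑ i, L i) - 1).natDegree ≤ n - 1 := by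
        refine le_trans (natDegree_sub_le _ _) (max_le ?_ (by simp))
        refine natDegree_sum_le_of_forall_le _ _ ?_
        intro i _
        rw [hLdef]
        refine le_trans (natDegree_mul_le) ?_
        simp only [natDegree_C, zero_add]
        refine le_trans (natDegree_prod_le _ _) ?_
        have hbound : ∀ j ∈ Finset.univ.erase i, (X - C (lam j)).natDegree ≤ 1 :=
          fun j _ => le_of_eq (natDegree_X_sub_C _)
        refine le_trans (Finset.sum_le_sum hbound) ?_
        rw [Finset.sum_const, smul_eq_mul, mul_one, Finset.card_erase_of_mem
          (Finset.mem_univ i), Finset.card_univ, Fintype.card_fin]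
      omega
    exact sub_eq_zero.mp hQ0
  -- the idempotents
  set e : Fin n → Module.End R M := fun i => Polynomial.aeval f (L i) with hedef
  have he_sum : ∑ i, e i = 1 := by
    rw [hedef, ← map_sum, hLsum, map_one]
  -- divisibility : P ∣ ∏_{≠ i} * ∏_{≠ j} for i ≠ j
  have hPd : ∀ i j : Fin n, i ≠ j →
      P ∣ (∏ k ∈ Finset.univ.erase i, (X - C (lam k))) *
          ∏ k ∈ Finset.univ.erase j, (X - C (lam k)) := by
    intro i j hij
    have hPfact : P = (X - C (lam j)) * ∏ k ∈ Finset.univ.erase j, (X - C (lam k)) :=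
      (Finset.mul_prod_erase _ _ (Finset.mem_univ j)).symm
    obtain ⟨B, hB⟩ := Finset.dvd_prod_of_mem (fun k => X - C (lam k))
      (Finset.mem_erase.mpr ⟨fun h => hij h.symm, Finset.mem_univ j⟩)
    exact ⟨B, by rw [hB, hPfact]; ring⟩
  have horth : ∀ i j : Fin n, i ≠ j → e i * e j = 0 := by
    intro i j hij
    rw [hedef]
    simp only
    rw [← map_mul]
    refine haeval_dvd _ ?_
    refine dvd_trans (hPd i j hij) ⟨C (c i) * C (c j), ?_⟩
    rw [hLdef]; ring
  have hfix : ∀ (i : Fin n) (x : M), f (e i x) = lam i • e i x := by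
    intro i x
    have hpoly : (X - C (lam i)) * L i = C (c i) * P := by
      rw [hLdef, hPdef, ← Finset.mul_prod_erase _ _ (Finset.mem_univ i)]; ring
    have h0 : (f - algebraMap R (Module.End R M) (lam i)) * e i = 0 := by
      have hsub : f - algebraMap R (Module.End R M) (lam i)
          = Polynomial.aeval f (X - C (lam i)) := by
        rw [map_sub, aeval_X, aeval_C]
      rw [hsub, hedef]
      simp only
      rw [← map_mul, hpoly]
      exact haeval_dvd _ (dvd_mul_left _ _)
    have := congrFun (congrArg DFunLike.coe h0) x
    simp only [Module.End.mul_apply, LinearMap.sub_apply, LinearMap.zero_apply,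
      Module.algebraMap_end_apply] at this
    · rw [sub_eq_zero] at this
      exact this
  have hidem : ∀ i, e i * e i = e i := by
    intro i
    have h := congrArg (fun g => e i * g) he_sum
    simp only [mul_one] at h
    rw [Finset.mul_sum, Finset.sum_eq_single i
      (fun j _ hji => horth i j (fun h' => hji h'.symm)) (by simp)] at h
    exact h
  -- the submodules
  set N : Fin n → Submodule R M := fun i => LinearMap.range (e i) with hNdef
  have hNfix : ∀ (i : Fin n), ∀ x ∈ N i, e i x = x := by
    rintro i x ⟨y, rfl⟩
    have := congrFun (congrArg DFunLike.coe (hidem i)) y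
    simpa [Module.End.mul_apply] using this
  have hNker : ∀ (i j : Fin n), i ≠ j → ∀ x ∈ N j, e i x = 0 := by
    rintro i j hij x ⟨y, rfl⟩
    have := congrFun (congrArg DFunLike.coe (horth i j hij)) y
    simpa [Module.End.mul_apply] using this
  have hNeig : ∀ (i : Fin n), ∀ x ∈ N i, f x = lam i • x := by
    rintro i x ⟨y, rfl⟩
    exact hfix i y
  -- internal direct sum
  have hIsInt : DirectSum.IsInternal N := by
    rw [DirectSum.isInternal_submodule_iff_iSupIndep_and_iSup_eq_top]
    constructor
    · intro i
      rw [disjoint_iff_inf_le]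
      rintro x ⟨hxi, hxsup⟩
      have h1 : e i x = x := hNfix i x hxi
      have hle : (⨆ j, ⨆ _ : j ≠ i, N j) ≤ LinearMap.ker (e i) := by
        refine iSup_le fun j => iSup_le fun hj => ?_
        intro y hy
        exact hNker i j (fun h => hj h.symm) y hy
      have h2 : e i x = 0 := hle hxsup
      simp only [Submodule.mem_bot]
      rw [← h1, h2]
    · rw [eq_top_iff]
      intro x _
      have hx : x = ∑ i, e i x := by
        have := congrFun (congrArg DFunLike.coe he_sum) x
        simpa [LinearMap.sum_apply] using this.symm
      rw [hx]
      exact Submodule.sum_mem _ fun i _ => Submodule.mem_iSup_of_mem i ⟨x, rfl⟩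
  -- each N i is finite free
  haveI hNfin : ∀ i, Module.Finite R (N i) := fun i => Module.Finite.range (e i)
  haveI hNproj : ∀ i, Module.Projective R (N i) := by
    intro i
    refine Module.Projective.of_split (N i).subtype (e i).rangeRestrict ?_
    ext x
    simpa using hNfix i x x.2
  haveI hNfree : ∀ i, Module.Free R (N i) := by
    intro i
    haveI := Module.finitePresentation_of_projective R (N i)
    exact Module.free_of_flat_of_isLocalRing
  -- ranks
  have hsum_r : ∑ i, Module.finrank R (N i) = n := by
    let bases := fun i => Module.Free.chooseBasis R (N i)
    have hcard := Module.finrank_eq_card_basis (hIsInt.collectedBasis bases)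
    calc ∑ i, Module.finrank R (N i)
        = ∑ i, Fintype.card (Module.Free.ChooseBasisIndex R (N i)) :=
          Finset.sum_congr rfl fun i _ => Module.finrank_eq_card_chooseBasisIndex R (N i)
      _ = Fintype.card (Σ i, Module.Free.ChooseBasisIndex R (N i)) :=
          Fintype.card_sigma.symm
      _ = Module.finrank R M := hcard.symm
      _ = n := hrank
  -- each rank is at least 1
  have hge : ∀ i, 1 ≤ Module.finrank R (N i) := by
    intro i
    by_contra hlt
    have hr0 : Module.finrank R (N i) = 0 := by omega
    -- then N i = ⊥ and e i = 0
    have hsub : Subsingleton (N i) := by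
      have hcard : Fintype.card (Module.Free.ChooseBasisIndex R (N i)) = 0 := by
        rw [← Module.finrank_eq_card_chooseBasisIndex, hr0]
      haveI : IsEmpty (Module.Free.ChooseBasisIndex R (N i)) :=
        Fintype.card_eq_zero_iff.mp hcard
      exact (Module.Free.chooseBasis R (N i)).repr.toEquiv.subsingleton
    have hNbot : N i = ⊥ := by
      haveI := hsub
      exact Submodule.eq_bot_of_subsingleton
    have hei0 : e i = 0 := LinearMap.range_eq_bot.mp hNbot
    -- then f satisfies the degree (n-1) polynomial G
    set G : R[X] := ∏ j ∈ Finset.univ.erase i, (X - C (lam j)) with hGdef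
    have haevalG : Polynomial.aeval f G = 0 := by
      have h1 : Polynomial.aeval f G = Polynomial.aeval f G * ∑ j, e j := by
        rw [he_sum, mul_one]
      rw [Finset.mul_sum] at h1
      have h2 : ∀ j, Polynomial.aeval f G * e j = 0 := by
        intro j
        by_cases hji : j = i
        · rw [hji, hei0, mul_zero]
        · rw [hedef]
          simp only
          rw [← map_mul]
          refine haeval_dvd _ ?_
          refine dvd_trans (hPd i j (fun h => hji h.symm)) ⟨C (c j), ?_⟩
          rw [hLdef, hGdef]; ring
      rw [h1, Finset.sum_congr rfl (fun j _ => h2 j), Finset.sum_const, smul_zero]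
    -- transfer to matrices over the residue field and find an eigenvector: contradiction
    let ι := Module.Free.ChooseBasisIndex R M
    let b0 : Module.Basis ι R M := Module.Free.chooseBasis R M
    set A : Matrix ι ι R := LinearMap.toMatrixAlgEquiv b0 f with hAdef
    have hGA : Polynomial.aeval A G = 0 := by
      have h := Polynomial.aeval_algHom_apply (LinearMap.toMatrixAlgEquiv b0).toAlgHom f G
      rw [hAdef]
      show Polynomial.aeval ((LinearMap.toMatrixAlgEquiv b0).toAlgHom f) G = 0
      rw [h, haevalG, map_zero]
    set kk := IsLocalRing.ResidueField R with hkkdef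
    set φ : R →+* kk := IsLocalRing.residue R with hφdef
    set ψ : Matrix ι ι R →+* Matrix ι ι kk := φ.mapMatrix with hψdef
    set Abar : Matrix ι ι kk := A.map φ with hAbardef
    have hGAbar : Polynomial.aeval Abar (G.map φ) = 0 := by
      have hcomp : ψ.comp (algebraMap R (Matrix ι ι R))
          = (algebraMap kk (Matrix ι ι kk)).comp φ := by
        ext r i j
        simp [hψdef, Matrix.algebraMap_matrix_apply, apply_ite φ]
      calc Polynomial.aeval Abar (G.map φ)
          = Polynomial.eval₂ (algebraMap kk (Matrix ι ι kk)) Abar (G.map φ) := by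
            rw [Polynomial.aeval_def]
        _ = Polynomial.eval₂ ((algebraMap kk (Matrix ι ι kk)).comp φ) Abar G := by
            rw [Polynomial.eval₂_map]
        _ = Polynomial.eval₂ (ψ.comp (algebraMap R (Matrix ι ι R))) (ψ A) G := by
            rw [hcomp]; rfl
        _ = ψ (Polynomial.eval₂ (algebraMap R (Matrix ι ι R)) A G) :=
            (Polynomial.hom_eval₂ G _ ψ A).symm
        _ = ψ (Polynomial.aeval A G) := by rw [Polynomial.aeval_def]
        _ = 0 := by rw [hGA, map_zero]
    -- characteristic polynomial of Abar
    have hchAbar : Abar.charpoly = ∏ j : Fin n, (X - C (φ (lam j))) := by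
      rw [hAbardef, Matrix.charpoly_map]
      have hAf : A.charpoly = f.charpoly := by
        rw [hAdef]
        exact (LinearMap.charpoly_toMatrix f b0).symm
      rw [hAf, hchar, Polynomial.map_prod]
      simp
    have hroot : Abar.charpoly.eval (φ (lam i)) = 0 := by
      rw [hchAbar, eval_prod]
      refine Finset.prod_eq_zero (Finset.mem_univ i) ?_
      simp
    obtain ⟨v, hv0, hveig⟩ := aux_exists_eigen Abar (φ (lam i)) hroot
    have hGmap : G.map φ = ∏ j ∈ Finset.univ.erase i, (X - C (φ (lam j))) := by
      rw [hGdef, Polynomial.map_prod]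
      simp
    have hmv := aux_aeval_prod_mulVec Abar v (φ (lam i)) hveig (fun j => φ (lam j))
      (Finset.univ.erase i)
    rw [← hGmap, hGAbar] at hmv
    have hprod : (∏ j ∈ Finset.univ.erase i, (φ (lam i) - φ (lam j))) ≠ 0 := by
      refine Finset.prod_ne_zero_iff.mpr ?_
      intro j hj h0
      rw [← map_sub] at h0
      exact hdist i j (fun h => (Finset.mem_erase.mp hj).1 h.symm)
        (Ideal.Quotient.eq_zero_iff_mem.mp h0)
    rw [Matrix.zero_mulVec] at hmv
    rcases smul_eq_zero.mp hmv.symm with h | h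
    · exact hprod h
    · exact hv0 h
  -- hence each rank is exactly 1
  have hr1 : ∀ i, Module.finrank R (N i) = 1 := by
    have hsum1 : ∑ _i : Fin n, 1 = ∑ i, Module.finrank R (N i) := by
      rw [hsum_r]; simp
    intro i
    exact ((Finset.sum_eq_sum_iff_of_le (fun j _ => hge j)).mp hsum1 i
      (Finset.mem_univ i)).symm
  -- build the basis
  have hbases : ∀ i, Module.Basis (Fin 1) R (N i) := by
    intro i
    have hcard : Fintype.card (Module.Free.ChooseBasisIndex R (N i)) = 1 := by
      rw [← Module.finrank_eq_card_chooseBasisIndex, hr1]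
    exact (Module.Free.chooseBasis R (N i)).reindex
      (Fintype.equivFinOfCardEq hcard)
  let bcoll := hIsInt.collectedBasis (fun i => hbases i)
  let eqv : (Σ _i : Fin n, Fin 1) ≃ Fin n :=
    (Equiv.sigmaEquivProd (Fin n) (Fin 1)).trans (Equiv.prodUnique (Fin n) (Fin 1))
  refine ⟨bcoll.reindex eqv, ?_⟩
  intro i
  have hmem : bcoll.reindex eqv i ∈ N i := by
    rw [Module.Basis.reindex_apply]
    have : eqv.symm i = ⟨i, 0⟩ := rfl
    rw [this]
    exact hIsInt.collectedBasis_mem (fun i => hbases i) ⟨i, 0⟩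
  exact hNeig i _ hmem
end

section
/- Let R be a commutative ring, let M be a free R-module of rank n ≥ 1 equipped with a complete flag Fil_• and a basis (e_i)_{1≤i≤n} of Fil_•, let w be a permutation of {1, …, n}, and let F_• = (F_j)_{0≤j≤n} be a complete flag on M. Suppose that for each 1 ≤ j ≤ n we are given an element b_j ∈ F_j which can be written b_j = ∑_{i ≤ w(j)} r_{ij} e_i with r_{w(j),j} ∈ R^×. Then (b_j)_{1≤j≤n} is a basis of the flag F_•, i.e., for every 1 ≤ j ≤ n the class of b_j in F_j/F_{j−1} generates F_j/F_{j−1}. -/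
/-- A complete flag on a module `M`: a chain `⊥ = Fil 0 ⊆ ⋯ ⊆ Fil n = ⊤` of submodules
whose successive quotients are free of rank one. -/
def IsCompleteFlag {R M : Type*} [CommRing R] [AddCommGroup M] [Module R M] {n : ℕ}
    (Fil : Fin (n + 1) → Submodule R M) : Prop :=
  Fil 0 = ⊥ ∧ Fil (Fin.last n) = ⊤ ∧ Monotone Fil ∧
    ∀ i : Fin n, Nonempty
      ((↥(Fil i.succ) ⧸ (Fil i.castSucc).comap (Fil i.succ).subtype) ≃ₗ[R] R)

/-- A basis of a flag: a family `(eᵢ)` with `eᵢ ∈ Fil i` whose class generates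
`Fil i / Fil (i-1)` for each `i`. -/
def IsFlagBasis {R M : Type*} [CommRing R] [AddCommGroup M] [Module R M] {n : ℕ}
    (Fil : Fin (n + 1) → Submodule R M) (e : Fin n → M) : Prop :=
  ∀ i : Fin n, ∃ h : e i ∈ Fil i.succ,
    Submodule.span R {(Submodule.Quotient.mk ⟨e i, h⟩ :
      ↥(Fil i.succ) ⧸ (Fil i.castSucc).comap (Fil i.succ).subtype)} = ⊤

open Submodule

section Helpers

variable {R M : Type*} [CommRing R] [AddCommGroup M] [Module R M]

lemma quot_span_singleton_top_iff {N P : Submodule R M} {y : M} (hy : y ∈ P) :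
    Submodule.span R {(Submodule.Quotient.mk ⟨y, hy⟩ : ↥P ⧸ N.comap P.subtype)} = ⊤ ↔
      ∀ x ∈ P, ∃ c : R, x - c • y ∈ N := by
  constructor
  · intro h x hx
    have hmem : (Submodule.Quotient.mk ⟨x, hx⟩ : ↥P ⧸ N.comap P.subtype) ∈
        Submodule.span R {(Submodule.Quotient.mk ⟨y, hy⟩ : ↥P ⧸ N.comap P.subtype)} := by
      rw [h]; trivial
    rw [Submodule.mem_span_singleton] at hmem
    obtain ⟨c, hc⟩ := hmem
    refine ⟨c, ?_⟩
    rw [← Submodule.Quotient.mk_smul, Submodule.Quotient.eq] at hc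
    have : -(x - c • y) ∈ N := by simpa [Submodule.mem_comap, sub_eq_add_neg] using hc
    simpa using neg_mem this
  · intro h
    rw [eq_top_iff]
    rintro z -
    obtain ⟨⟨x, hx⟩, rfl⟩ := Submodule.Quotient.mk_surjective _ z
    obtain ⟨c, hc⟩ := h x hx
    rw [Submodule.mem_span_singleton]
    refine ⟨c, ?_⟩
    rw [← Submodule.Quotient.mk_smul, Submodule.Quotient.eq]
    simpa [Submodule.mem_comap, sub_eq_add_neg] using neg_mem hc
lemma linearIndependent_of_span_top_of_card [Nontrivial R] {ι : Type*} [Fintype ι]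
    {Q : Type*} [AddCommGroup Q] [Module R Q] [Module.Free R Q] [Module.Finite R Q]
    (v : ι → Q) (hspan : Submodule.span R (Set.range v) = ⊤)
    (hcard : Fintype.card ι = Module.finrank R Q) :
    LinearIndependent R v := by
  have hsurj : Function.Surjective (Fintype.linearCombination R v) := by
    intro x
    have hx : x ∈ Submodule.span R (Set.range v) := hspan ▸ mem_top
    rw [mem_span_range_iff_exists_fun] at hx
    obtain ⟨c, hc⟩ := hx
    exact ⟨c, by simpa [Fintype.linearCombination_apply] using hc⟩
  have hcard' : ι ≃ Module.Free.ChooseBasisIndex R Q :=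
    Fintype.equivOfCardEq (by rw [hcard, Module.finrank_eq_card_chooseBasisIndex])
  let eqv : Q ≃ₗ[R] (ι → R) :=
    (Module.Free.chooseBasis R Q).equivFun.trans (LinearEquiv.funCongrLeft R R hcard')
  have hinj : Function.Injective
      (eqv.toLinearMap ∘ₗ Fintype.linearCombination R v) :=
    OrzechProperty.injective_of_surjective_endomorphism _
      (eqv.surjective.comp hsurj)
  have hinj' : Function.Injective (Fintype.linearCombination R v) := by
    intro a b hab
    exact hinj (by simp [LinearMap.comp_apply, hab])
  rw [Fintype.linearIndependent_iff]
  intro g hg i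
  have : (Fintype.linearCombination R v) g = (Fintype.linearCombination R v) 0 := by
    simp [Fintype.linearCombination_apply, hg]
  have h0 : g = 0 := hinj' this
  simpa using congrFun h0 i
lemma completeFlag_quot_structure [Nontrivial R] {n : ℕ} {F : Fin (n+1) → Submodule R M}
    (hF : IsCompleteFlag F) (k : Fin (n+1)) :
    Module.Free R (M ⧸ F k) ∧ Module.Finite R (M ⧸ F k) ∧
      Module.finrank R (M ⧸ F k) = n - (k : ℕ) := by
  obtain ⟨h0, hlast, hmono, hquot⟩ := hF
  induction k using Fin.reverseInduction with
  | last =>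
    have hsub : Subsingleton (M ⧸ F (Fin.last n)) :=
      Submodule.Quotient.subsingleton_iff.mpr hlast
    refine ⟨inferInstance, ⟨?_⟩, ?_⟩
    · rw [Subsingleton.elim (⊤ : Submodule R (M ⧸ F (Fin.last n))) ⊥]; exact Submodule.fg_bot
    · rw [Module.finrank_zero_of_subsingleton]; simp
  | cast k IH =>
    obtain ⟨hfree, hfin, hrk⟩ := IH
    set N := F k.castSucc with hN
    set P := F k.succ with hP
    have hle : N ≤ P := hmono (Fin.castSucc_le_succ k)
    set S : Submodule R (M ⧸ N) := P.map N.mkQ with hS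
    let equiv1 : ((M ⧸ N) ⧸ S) ≃ₗ[R] (M ⧸ P) := Submodule.quotientQuotientEquivQuotient N P hle
    let f : ↥P →ₗ[R] M ⧸ N := N.mkQ ∘ₗ P.subtype
    have hker : LinearMap.ker f = N.comap P.subtype := by
      rw [LinearMap.ker_comp, Submodule.ker_mkQ]
    have hrange : LinearMap.range f = S := by
      rw [LinearMap.range_comp, Submodule.range_subtype]
    obtain ⟨equiv3⟩ := hquot k
    let eS : ↥S ≃ₗ[R] R :=
      (((LinearEquiv.ofEq _ _ hrange).symm.trans f.quotKerEquivRange.symm).trans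
        (Submodule.quotEquivOfEq _ _ hker)).trans equiv3
    haveI hfree' : Module.Free R ((M ⧸ N) ⧸ S) := Module.Free.of_equiv equiv1.symm
    haveI hfin' : Module.Finite R ((M ⧸ N) ⧸ S) := Module.Finite.equiv equiv1.symm
    obtain ⟨s, hs⟩ := S.mkQ.exists_rightInverse_of_surjective (Submodule.range_mkQ S)
    have hsinj : Function.Injective s := by
      intro a b hab
      have := congrArg S.mkQ hab
      calc a = S.mkQ (s a) := by rw [← LinearMap.comp_apply, hs]; rfl
      _ = S.mkQ (s b) := this
      _ = b := by rw [← LinearMap.comp_apply, hs]; rfl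
    have hcompl : IsCompl S (LinearMap.range s) := by
      constructor
      · rw [disjoint_iff, eq_bot_iff]
        rintro x ⟨hxS, ⟨y, rfl⟩⟩
        have h1 : S.mkQ (s y) = 0 := (Submodule.Quotient.mk_eq_zero _).mpr hxS
        have h2 : S.mkQ (s y) = y := by rw [← LinearMap.comp_apply, hs]; rfl
        rw [h1] at h2
        simp [← h2]
      · rw [codisjoint_iff, eq_top_iff]
        rintro x -
        have hx0 : S.mkQ (x - s (S.mkQ x)) = 0 := by
          rw [map_sub, ← LinearMap.comp_apply, hs]; simp
        have hx1 : x - s (S.mkQ x) ∈ S := by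
          rwa [Submodule.mkQ_apply, Submodule.Quotient.mk_eq_zero] at hx0
        have : x = (x - s (S.mkQ x)) + s (S.mkQ x) := by abel
        rw [this]
        exact Submodule.add_mem_sup hx1 ⟨S.mkQ x, rfl⟩
    let eprod : (↥S × ↥(LinearMap.range s)) ≃ₗ[R] (M ⧸ N) :=
      Submodule.prodEquivOfIsCompl S (LinearMap.range s) hcompl
    let erange : ((M ⧸ N) ⧸ S) ≃ₗ[R] ↥(LinearMap.range s) := LinearEquiv.ofInjective s hsinj
    haveI : Module.Free R ↥S := Module.Free.of_equiv eS.symm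
    haveI : Module.Finite R ↥S := Module.Finite.equiv eS.symm
    haveI : Module.Free R ↥(LinearMap.range s) := Module.Free.of_equiv erange
    haveI : Module.Finite R ↥(LinearMap.range s) := Module.Finite.equiv erange
    refine ⟨Module.Free.of_equiv eprod, Module.Finite.equiv eprod, ?_⟩
    have h1 : Module.finrank R (M ⧸ N) = Module.finrank R (↥S × ↥(LinearMap.range s)) :=
      (LinearEquiv.finrank_eq eprod).symm
    have h2 : Module.finrank R ↥S = 1 := by
      rw [LinearEquiv.finrank_eq eS, Module.finrank_self]
    have h3 : Module.finrank R ↥(LinearMap.range s) = n - ((k : ℕ) + 1) := by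
      rw [← LinearEquiv.finrank_eq erange, LinearEquiv.finrank_eq equiv1]
      simpa using hrk
    rw [h1, Module.finrank_prod, h2, h3]
    have : (k : ℕ) < n := k.isLt
    simp only [Fin.coe_castSucc]
    omega
end Helpers

/-- Let `M` be free of rank `n ≥ 1` with complete flags `Fil` (with flag
basis `e`) and `F`, and let `w` be a permutation. If `b j ∈ F j` can be written
`b j = ∑_{i ≤ w j} r i j • e i` with `r (w j) j ∈ Rˣ`, then `(b j)` is a flag basis
of `F`. -/
theorem isFlagBasis_of_schubert_form {R M : Type*} [CommRing R] [AddCommGroup M]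
    [Module R M] [Module.Free R M] {n : ℕ} (hn : 1 ≤ n) (hrank : Module.finrank R M = n)
    (Fil : Fin (n + 1) → Submodule R M) (hFil : IsCompleteFlag Fil)
    (e : Fin n → M) (he : IsFlagBasis Fil e)
    (w : Equiv.Perm (Fin n))
    (F : Fin (n + 1) → Submodule R M) (hF : IsCompleteFlag F)
    (b : Fin n → M) (r : Fin n → Fin n → R)
    (hb : ∀ j : Fin n, b j ∈ F j.succ)
    (hdecomp : ∀ j : Fin n, b j = ∑ i ∈ Finset.Iic (w j), r i j • e i)
    (hunit : ∀ j : Fin n, IsUnit (r (w j) j)) :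
    IsFlagBasis F b := by
  classical
  intro j
  refine ⟨hb j, ?_⟩
  rw [quot_span_singleton_top_iff (hb j)]
  rcases subsingleton_or_nontrivial R with hR | hR
  · haveI : Subsingleton M := Module.subsingleton R M
    intro x hx
    exact ⟨0, by rw [Subsingleton.elim (x - (0 : R) • b j) 0]; exact zero_mem _⟩
  -- `e` spans `M`
  have espan : ∀ k : Fin (n+1), Fil k ≤ Submodule.span R (Set.range e) := by
    intro k
    induction k using Fin.induction with
    | zero => rw [hFil.1]; exact bot_le
    | succ i IH =>
      intro x hx
      obtain ⟨hei, hgen⟩ := he i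
      obtain ⟨c, hc⟩ := (quot_span_singleton_top_iff hei).1 hgen x hx
      have hxeq : x = (x - c • e i) + c • e i := by abel
      rw [hxeq]
      exact add_mem (IH hc) (smul_mem _ _ (subset_span ⟨i, rfl⟩))
  have espan_top : Submodule.span R (Set.range e) = ⊤ :=
    top_unique (hFil.2.1 ▸ espan (Fin.last n))
  -- `b` spans `M`
  have ebspan : ∀ m : ℕ, ∀ i : Fin n, (i : ℕ) < m → e i ∈ Submodule.span R (Set.range b) := by
    intro m
    induction m with
    | zero => exact fun i h => absurd h (by omega)
    | succ m IH =>
      intro i hi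
      rcases Nat.lt_or_ge (i : ℕ) m with h | h
      · exact IH i h
      · have him : (i : ℕ) = m := by omega
        set j' := w.symm i with hj'
        have hwj : w j' = i := w.apply_symm_apply i
        obtain ⟨u, hu⟩ := hunit j'
        have hdec := hdecomp j'
        rw [hwj] at hdec hu
        have hIic : Finset.Iic i = insert i (Finset.Iio i) := by
          ext a
          simp [Finset.mem_Iic, Finset.mem_Iio, le_iff_lt_or_eq, or_comm]
        rw [hIic, Finset.sum_insert (by simp)] at hdec
        have heq : e i = (↑u⁻¹ : R) • (b j' - ∑ a ∈ Finset.Iio i, r a j' • e a) := by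
          rw [hdec, add_sub_cancel_right, ← hu, smul_smul, Units.inv_mul, one_smul]
        rw [heq]
        refine smul_mem _ _ (sub_mem (subset_span ⟨j', rfl⟩)
          (sum_mem fun a ha => smul_mem _ _ (IH a ?_)))
        have : (a : ℕ) < (i : ℕ) := Fin.lt_def.mp (Finset.mem_Iio.mp ha)
        omega
  have bspan : Submodule.span R (Set.range b) = ⊤ := by
    rw [eq_top_iff, ← espan_top]
    refine Submodule.span_le.2 ?_
    rintro _ ⟨i, rfl⟩
    exact ebspan n i i.isLt
  -- structure of quotients
  obtain ⟨fr1, fi1, rk1⟩ := completeFlag_quot_structure hF j.castSucc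
  obtain ⟨fr2, fi2, rk2⟩ := completeFlag_quot_structure hF j.succ
  set N := F j.castSucc with hNdef
  set P := F j.succ with hPdef
  have hle : N ≤ P := hF.2.2.1 (Fin.castSucc_le_succ j)
  set π := N.mkQ with hπ
  set ρ := P.mkQ with hρ
  -- spanning family in M ⧸ N
  have hπb : Submodule.span R (Set.range (π ∘ b)) = ⊤ := by
    rw [Set.range_comp, ← Submodule.map_span, bspan, Submodule.map_top, Submodule.range_mkQ]
  set vv : {k : Fin n // j ≤ k} → M ⧸ N := fun k => π (b k) with hvv
  have hbk_lt : ∀ k : Fin n, k < j → b k ∈ N := by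
    intro k hk
    refine hF.2.2.1 ?_ (hb k)
    show k.succ ≤ j.castSucc
    simp only [Fin.le_def, Fin.val_succ, Fin.coe_castSucc]
    exact hk
  have hvvspan : Submodule.span R (Set.range vv) = ⊤ := by
    rw [eq_top_iff, ← hπb]
    refine Submodule.span_le.2 ?_
    rintro _ ⟨k, rfl⟩
    rcases le_or_gt j k with h | h
    · exact subset_span ⟨⟨k, h⟩, rfl⟩
    · have : π (b k) = 0 := (Submodule.Quotient.mk_eq_zero _).mpr (hbk_lt k h)
      simp only [Function.comp_apply, this]
      exact zero_mem _
  -- independent family in M ⧸ P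
  set uu : {k : Fin n // j < k} → M ⧸ P := fun k => ρ (b k) with huu
  have hbk_le : ∀ k : Fin n, k ≤ j → b k ∈ P := by
    intro k hk
    refine hF.2.2.1 ?_ (hb k)
    show k.succ ≤ j.succ
    exact Fin.succ_le_succ_iff.mpr hk
  have hρb : Submodule.span R (Set.range (ρ ∘ b)) = ⊤ := by
    rw [Set.range_comp, ← Submodule.map_span, bspan, Submodule.map_top, Submodule.range_mkQ]
  have huuspan : Submodule.span R (Set.range uu) = ⊤ := by
    rw [eq_top_iff, ← hρb]
    refine Submodule.span_le.2 ?_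
    rintro _ ⟨k, rfl⟩
    rcases lt_or_ge j k with h | h
    · exact subset_span ⟨⟨k, h⟩, rfl⟩
    · have : ρ (b k) = 0 := (Submodule.Quotient.mk_eq_zero _).mpr (hbk_le k h)
      simp only [Function.comp_apply, this]
      exact zero_mem _
  have hcard2 : Fintype.card {k : Fin n // j < k} = Module.finrank R (M ⧸ P) := by
    rw [Fintype.card_subtype, rk2]
    have hfilter : Finset.univ.filter (fun k => j < k) = Finset.Ioi j := by
      ext a; simp
    rw [hfilter, Fin.card_Ioi]
    simp only [Fin.val_succ]
    omega
  have ind2 : LinearIndependent R uu :=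
    linearIndependent_of_span_top_of_card uu huuspan hcard2
  -- final argument
  intro x hx
  have hπx : π x ∈ Submodule.span R (Set.range vv) := hvvspan ▸ mem_top
  rw [mem_span_range_iff_exists_fun] at hπx
  obtain ⟨c, hc⟩ := hπx
  set c' : Fin n → R := fun k => if h : j ≤ k then c ⟨k, h⟩ else 0 with hc'def
  have conv : ∀ (T : Type _) (_ : AddCommGroup T), ∀ (_ : Module R T), ∀ (f : Fin n → T),
      ∑ k : {k : Fin n // j ≤ k}, c k • f k = ∑ k, c' k • f k := by
    intro T _ _ f
    have step1 : ∑ k : {k : Fin n // j ≤ k}, c k • f ↑k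
        = ∑ k : {k : Fin n // j ≤ k}, c' ↑k • f ↑k := by
      refine Finset.sum_congr rfl fun k _ => ?_
      have : c' ↑k = c k := by
        rw [hc'def]; simp only [dif_pos k.2]
      rw [this]
    rw [step1]
    rw [← Finset.sum_subtype (Finset.univ.filter (fun k => j ≤ k)) (by simp)
      (fun k => c' k • f k)]
    refine Finset.sum_subset (Finset.filter_subset _ _) ?_
    intro k _ hk
    have : ¬ j ≤ k := by simpa using hk
    rw [hc'def]
    simp [dif_neg this]
  -- x - ∑ c' k • b k ∈ N
  have hxy : x - (∑ k, c' k • b k) ∈ N := by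
    rw [← Submodule.Quotient.eq]
    show π x = π (∑ k, c' k • b k)
    rw [map_sum]
    simp_rw [map_smul]
    rw [← conv _ _ _ (fun k => π (b k))]
    exact hc.symm
  -- in M ⧸ P : ∑ c' k • ρ (b k) = 0
  have hρ0 : ∑ k, c' k • ρ (b k) = 0 := by
    have h1 : ρ (x - (∑ k, c' k • b k)) = 0 :=
      (Submodule.Quotient.mk_eq_zero _).mpr (hle hxy)
    have h2 : ρ x = 0 := (Submodule.Quotient.mk_eq_zero _).mpr hx
    rw [map_sub, h2, zero_sub, neg_eq_zero, map_sum] at h1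
    simp_rw [map_smul] at h1
    exact h1
  -- coefficients above j vanish
  have hvanish : ∀ k : Fin n, j < k → c' k = 0 := by
    have hfilter : ∑ k ∈ Finset.univ.filter (fun k => j < k), c' k • ρ (b k)
        = ∑ k, c' k • ρ (b k) := by
      refine Finset.sum_subset (Finset.filter_subset _ _) ?_
      intro k _ hk
      have hkj : k ≤ j := not_lt.mp (by simpa using hk)
      have : ρ (b k) = 0 := (Submodule.Quotient.mk_eq_zero _).mpr (hbk_le k hkj)
      rw [this, smul_zero]
    have hsplit : ∑ k : {k : Fin n // j < k}, c' ↑k • ρ (b ↑k) = 0 := by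
      rw [← Finset.sum_subtype (Finset.univ.filter (fun k => j < k)) (by simp)
        (fun k => c' k • ρ (b k)), hfilter, hρ0]
    intro k hk
    exact Fintype.linearIndependent_iff.1 ind2 (fun k => c' ↑k) hsplit ⟨k, hk⟩
  refine ⟨c' j, ?_⟩
  have hysum : ∑ k, c' k • b k = c' j • b j := by
    refine Finset.sum_eq_single j (fun k _ hkj => ?_) (by simp)
    rcases lt_or_ge j k with h | h
    · rw [hvanish k h, zero_smul]
    · have hklt : k < j := lt_of_le_of_ne h hkj
      rw [hc'def]
      simp [dif_neg (not_le.mpr hklt)]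
  rwa [← hysum]
end

section
/- Let R be a commutative local ring with maximal ideal m, let M be a free R-module of rank n ≥ 1, and let f be an R-linear endomorphism of M whose characteristic polynomial factors as ∏_{i=1}^n (X − λ_i) in R[X], where λ_1, …, λ_n ∈ R have pairwise distinct images in R/m. Then there exists a unique complete flag F_• = (F_i)_{0≤i≤n} on M such that f(F_i) ⊆ F_i and (f − λ_i)(F_i) ⊆ F_{i−1} for all 1 ≤ i ≤ n; explicitly, F_i = ker(f − λ_1) ⊕ ⋯ ⊕ ker(f − λ_i) for all i. -/
open Polynomial LinearMap

section Helpers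

variable {R M : Type*} [CommRing R] [AddCommGroup M] [Module R M]

lemma aeval_X_sub_C_apply' (f : Module.End R M) (a : R) :
    aeval f (X - C a) = f - a • (1 : Module.End R M) := by
  rw [map_sub, aeval_X, aeval_C, Module.algebraMap_end_eq_smul_id]
  rfl

lemma pow_apply_mem {f : Module.End R M} {N : Submodule R M}
    (hN : ∀ x ∈ N, f x ∈ N) (k : ℕ) {x : M} (hx : x ∈ N) : (f ^ k) x ∈ N := by
  induction k with
  | zero => simpa using hx
  | succ k ih => rw [pow_succ', Module.End.mul_apply]; exact hN _ ih

lemma aeval_apply_mem {f : Module.End R M} {N : Submodule R M}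
    (hN : ∀ x ∈ N, f x ∈ N) (p : R[X]) {x : M} (hx : x ∈ N) : aeval f p x ∈ N := by
  induction p using Polynomial.induction_on' with
  | add p q hp hq => rw [map_add, LinearMap.add_apply]; exact N.add_mem hp hq
  | monomial k a =>
      rw [aeval_monomial, Module.End.mul_apply, Module.algebraMap_end_apply]
      exact N.smul_mem _ (pow_apply_mem hN k hx)

lemma aeval_prod_X_sub_C_apply {ι : Type*} (F : Module.End R M) (μ : R) {v : M}
    (hv : F v = μ • v) (s : Finset ι) (c : ι → R) :
    aeval F (∏ j ∈ s, (X - C (c j))) v = (∏ j ∈ s, (μ - c j)) • v := by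
  classical
  induction s using Finset.induction_on with
  | empty => simp
  | insert i s h ih =>
      rw [Finset.prod_insert h, Finset.prod_insert h, map_mul, Module.End.mul_apply, ih,
        aeval_X_sub_C_apply', map_smul, LinearMap.sub_apply, LinearMap.smul_apply,
        Module.End.one_apply, hv, ← sub_smul, smul_smul, mul_comm]

end Helpers

section Charpoly

lemma Matrix.eval_charpoly' {S ι : Type*} [CommRing S] [Fintype ι] [DecidableEq ι]
    (A : Matrix ι ι S) (μ : S) :
    A.charpoly.eval μ = (μ • (1 : Matrix ι ι S) - A).det := by
  rw [Matrix.charpoly, ← Polynomial.coe_evalRingHom, RingHom.map_det]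
  congr 1
  ext i j
  by_cases h : i = j
  · subst h
    simp [Matrix.charmatrix_apply_eq, Matrix.one_apply]
  · simp [Matrix.charmatrix_apply_ne _ _ _ h, Matrix.one_apply, h]

lemma LinearMap.eval_charpoly_end {R M : Type*} [CommRing R] [AddCommGroup M] [Module R M]
    [Module.Free R M] [Module.Finite R M] (g : Module.End R M) (μ : R) :
    g.charpoly.eval μ = LinearMap.det (μ • (1 : Module.End R M) - g) := by
  nontriviality R
  classical
  let b := Module.Free.chooseBasis R M
  rw [← LinearMap.charpoly_toMatrix g b, Matrix.eval_charpoly', ← LinearMap.det_toMatrix b]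
  congr 1
  rw [map_sub, map_smul, LinearMap.toMatrix_one]

end Charpoly

section Core

variable {R M : Type*} [CommRing R] [AddCommGroup M] [Module R M]
variable {n : ℕ} (f : Module.End R M) (lam : Fin n → R)

-- test names
example (f : Module.End R M) (a : R) : aeval f (X - C a) = f - a • 1 := by
  rw [map_sub, aeval_X, aeval_C, Module.algebraMap_end_eq_smul_id]; rfl

/-- splitting lemma -/
lemma split_lemma (hunit : ∀ i j : Fin n, i ≠ j → IsUnit (lam i - lam j))
    (s : Finset (Fin n)) (N : Submodule R M) (hN : ∀ x ∈ N, f x ∈ N)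
    (hann : ∀ x ∈ N, aeval f (∏ j ∈ s, (X - C (lam j))) x = 0) :
    N ≤ ⨆ j ∈ s, (N ⊓ LinearMap.ker (f - lam j • (1 : Module.End R M))) := by
  classical
  induction s using Finset.induction_on generalizing N with
  | empty =>
      intro x hx
      have := hann x hx
      simp only [Finset.prod_empty, map_one, Module.End.one_apply] at this
      simp [this]
  | insert i s his ih =>
      set p : R[X] := X - C (lam i) with hp
      set q : R[X] := ∏ j ∈ s, (X - C (lam j)) with hq
      have hcop : IsCoprime p q :=
        IsCoprime.prod_right fun j hj =>
          Polynomial.isCoprime_X_sub_C_of_isUnit_sub (hunit i j (by rintro rfl; exact his hj))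
      obtain ⟨u, v, huv⟩ := hcop
      intro x hx
      have hprod : aeval f (p * q) x = 0 := by
        have := hann x hx
        rwa [Finset.prod_insert his] at this
      have hxsplit : aeval f (u * p) x + aeval f (v * q) x = x := by
        rw [← LinearMap.add_apply, ← map_add, huv, map_one, Module.End.one_apply]
      have hzmem : aeval f (v * q) x ∈ N ⊓ LinearMap.ker (f - lam i • (1 : Module.End R M)) := by
        refine ⟨aeval_apply_mem hN _ hx, ?_⟩
        simp only [SetLike.mem_coe, LinearMap.mem_ker]
        rw [← aeval_X_sub_C_apply', ← Module.End.mul_apply, ← map_mul,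
          show (X - C (lam i)) * (v * q) = v * (p * q) by rw [hp]; ring,
          map_mul, Module.End.mul_apply, hprod, map_zero]
      set N' : Submodule R M := N ⊓ LinearMap.ker (aeval f q) with hN'def
      have hN' : ∀ w ∈ N', f w ∈ N' := by
        rintro w ⟨hw1, hw2⟩
        refine ⟨hN w hw1, ?_⟩
        simp only [SetLike.mem_coe, LinearMap.mem_ker] at hw2 ⊢
        have : aeval f q (f w) = aeval f (q * X) w := by
          rw [map_mul, Module.End.mul_apply, aeval_X]
        rw [this, mul_comm, map_mul, Module.End.mul_apply, hw2, map_zero]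
      have hymem : aeval f (u * p) x ∈ N' := by
        refine ⟨aeval_apply_mem hN _ hx, ?_⟩
        simp only [SetLike.mem_coe, LinearMap.mem_ker]
        rw [← Module.End.mul_apply, ← map_mul,
          show q * (u * p) = u * (p * q) by ring, map_mul, Module.End.mul_apply, hprod, map_zero]
      have hy' := ih N' hN' (fun w hw => hw.2) hymem
      have hmono : (⨆ j ∈ s, (N' ⊓ LinearMap.ker (f - lam j • (1 : Module.End R M))))
          ≤ ⨆ j ∈ insert i s, (N ⊓ LinearMap.ker (f - lam j • (1 : Module.End R M))) := by
        refine iSup₂_le fun j hj => ?_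
        refine le_trans (inf_le_inf_right _ inf_le_left) ?_
        exact le_iSup₂_of_le j (Finset.mem_insert_of_mem hj) le_rfl
      have hle2 : (N ⊓ LinearMap.ker (f - lam i • (1 : Module.End R M))) ≤
          ⨆ j ∈ insert i s, (N ⊓ LinearMap.ker (f - lam j • (1 : Module.End R M))) :=
        le_iSup₂_of_le i (Finset.mem_insert_self i s) le_rfl
      have hz' := hle2 hzmem
      have := add_mem (hmono hy') hz'
      rwa [hxsplit] at this

lemma ker_le_ker_prod (s : Finset (Fin n)) (j : Fin n) (hj : j ∈ s) :
    LinearMap.ker (f - lam j • (1 : Module.End R M)) ≤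
      LinearMap.ker (aeval f (∏ i ∈ s, (X - C (lam i)))) := by
  intro x hx
  rw [LinearMap.mem_ker] at hx ⊢
  rw [← Finset.prod_erase_mul _ _ hj, map_mul, Module.End.mul_apply, aeval_X_sub_C_apply', hx,
    map_zero]

lemma inf_ker_biSup_eq_bot (hunit : ∀ i j : Fin n, i ≠ j → IsUnit (lam i - lam j))
    (s : Finset (Fin n)) (k : Fin n) (hk : k ∉ s) :
    LinearMap.ker (f - lam k • (1 : Module.End R M)) ⊓
      (⨆ j ∈ s, LinearMap.ker (f - lam j • (1 : Module.End R M))) = ⊥ := by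
  classical
  have hle : (⨆ j ∈ s, LinearMap.ker (f - lam j • (1 : Module.End R M))) ≤
      LinearMap.ker (aeval f (∏ i ∈ s, (X - C (lam i)))) :=
    iSup₂_le fun j hj => ker_le_ker_prod f lam s j hj
  have hcop : IsCoprime (X - C (lam k)) (∏ j ∈ s, (X - C (lam j))) :=
    IsCoprime.prod_right fun j hj =>
      Polynomial.isCoprime_X_sub_C_of_isUnit_sub (hunit k j (by rintro rfl; exact hk hj))
  obtain ⟨u, v, huv⟩ := hcop
  rw [eq_bot_iff]
  rintro x ⟨hx1, hx2⟩
  have hx2' := hle hx2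
  simp only [SetLike.mem_coe, LinearMap.mem_ker] at hx1 hx2'
  have : x = aeval f (u * (X - C (lam k))) x + aeval f (v * ∏ j ∈ s, (X - C (lam j))) x := by
    rw [← LinearMap.add_apply, ← map_add, huv, map_one, Module.End.one_apply]
  rw [map_mul, Module.End.mul_apply, aeval_X_sub_C_apply', hx1, map_zero, map_mul,
    Module.End.mul_apply, hx2', map_zero, add_zero] at this
  simpa [this]

end Core
section Top
open TensorProduct

variable {R M : Type*} [CommRing R] [AddCommGroup M] [Module R M]
variable {n : ℕ} (f : Module.End R M) (lam : Fin n → R)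

lemma biSup_ker_eq_top [Module.Free R M] [Module.Finite R M]
    (hchar : f.charpoly = ∏ i : Fin n, (X - C (lam i)))
    (hunit : ∀ i j : Fin n, i ≠ j → IsUnit (lam i - lam j)) :
    (⨆ j ∈ (Finset.univ : Finset (Fin n)),
      LinearMap.ker (f - lam j • (1 : Module.End R M))) = ⊤ := by
  rw [eq_top_iff]
  have h0 : ∀ x : M, aeval f (∏ j ∈ Finset.univ, (X - C (lam j))) x = 0 := by
    intro x
    rw [show (∏ j ∈ Finset.univ, (X - C (lam j))) = f.charpoly from hchar.symm,
      aeval_self_charpoly]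
    rfl
  refine le_trans (split_lemma f lam hunit Finset.univ ⊤ (fun x _ => Submodule.mem_top)
    (fun x _ => h0 x)) ?_
  exact iSup₂_mono fun j hj => inf_le_right

lemma ker_ne_bot [IsLocalRing R] [Module.Free R M] [Module.Finite R M]
    (hchar : f.charpoly = ∏ i : Fin n, (X - C (lam i)))
    (hdist : ∀ i j, i ≠ j → lam i - lam j ∉ IsLocalRing.maximalIdeal R) (k : Fin n) :
    LinearMap.ker (f - lam k • (1 : Module.End R M)) ≠ ⊥ := by
  classical
  have hunit : ∀ i j : Fin n, i ≠ j → IsUnit (lam i - lam j) := fun i j h => by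
    by_contra hu
    exact hdist i j h (by rwa [IsLocalRing.mem_maximalIdeal, mem_nonunits_iff])
  intro hbot
  set g : Polynomial R := ∏ j ∈ Finset.univ.erase k, (X - C (lam j)) with hg
  have hgf : aeval f g = 0 := by
    ext x
    have hx : x ∈ ⨆ j ∈ (Finset.univ : Finset (Fin n)),
        LinearMap.ker (f - lam j • (1 : Module.End R M)) := by
      rw [biSup_ker_eq_top f lam hchar hunit]; trivial
    rw [← Finset.insert_erase (Finset.mem_univ k), Finset.iSup_insert, hbot, bot_sup_eq] at hx
    have hle : (⨆ j ∈ Finset.univ.erase k,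
        LinearMap.ker (f - lam j • (1 : Module.End R M))) ≤ LinearMap.ker (aeval f g) :=
      iSup₂_le fun j hj => ker_le_ker_prod f lam _ j hj
    simpa using hle hx
  -- pass to the residue field
  set κ := IsLocalRing.ResidueField R with hκ
  set φ := algebraMap R κ with hφ
  set F := f.baseChange κ with hF
  have hcharF : F.charpoly = ∏ j : Fin n, (X - C (φ (lam j))) := by
    rw [LinearMap.charpoly_baseChange, hchar, Polynomial.map_prod]
    simp [hφ]
  have hdet : LinearMap.det (φ (lam k) • (1 : Module.End κ (κ ⊗[R] M)) - F) = 0 := by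
    rw [← LinearMap.eval_charpoly_end, hcharF, eval_prod]
    exact Finset.prod_eq_zero (Finset.mem_univ k) (by simp)
  have hker := LinearMap.bot_lt_ker_of_det_eq_zero hdet
  obtain ⟨v, hv, hv0⟩ := Submodule.exists_mem_ne_zero_of_ne_bot hker.ne'
  have hFv : F v = φ (lam k) • v := by
    have := LinearMap.mem_ker.mp hv
    rw [LinearMap.sub_apply, LinearMap.smul_apply, Module.End.one_apply, sub_eq_zero] at this
    exact this.symm
  have key : aeval F (g.map φ) v = 0 := by
    have h1 : aeval F (g.map φ) = aeval F g := by
      rw [hφ, Polynomial.aeval_map_algebraMap]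
    have h2 : aeval F g = (Module.End.baseChangeHom R κ M) (aeval f g) := by
      rw [← Polynomial.aeval_algHom_apply]
      rfl
    rw [h1, h2, hgf, map_zero, LinearMap.zero_apply]
  have hmapg : g.map φ = ∏ j ∈ Finset.univ.erase k, (X - C (φ (lam j))) := by
    rw [hg, Polynomial.map_prod]
    simp
  rw [hmapg, aeval_prod_X_sub_C_apply F (φ (lam k)) hFv] at key
  have hne : (∏ j ∈ Finset.univ.erase k, (φ (lam k) - φ (lam j))) ≠ 0 := by
    refine Finset.prod_ne_zero_iff.mpr fun j hj => ?_
    rw [← map_sub]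
    have hjk : k ≠ j := fun h => (Finset.mem_erase.mp hj).1 h.symm
    have : IsUnit (lam k - lam j) := hunit k j hjk
    rw [hφ, IsLocalRing.ResidueField.algebraMap_eq]
    rw [Ne, IsLocalRing.residue_eq_zero_iff]
    exact hdist k j hjk
  exact hv0 ((smul_eq_zero.mp key).resolve_left hne)

end Top
section RankOne
open TensorProduct DirectSum

variable {R M : Type*} [CommRing R] [AddCommGroup M] [Module R M]
variable {n : ℕ} (f : Module.End R M) (lam : Fin n → R)

lemma iSup_ker_erase_eq (k : Fin n) :
    (⨆ j, ⨆ _ : j ≠ k, LinearMap.ker (f - lam j • (1 : Module.End R M))) =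
      ⨆ j ∈ Finset.univ.erase k, LinearMap.ker (f - lam j • (1 : Module.End R M)) := by
  classical
  refine le_antisymm (iSup₂_le fun j hj => ?_) (iSup₂_le fun j hj => ?_)
  · exact le_iSup₂_of_le j (Finset.mem_erase.mpr ⟨hj, Finset.mem_univ j⟩) le_rfl
  · exact le_iSup₂_of_le j (Finset.mem_erase.mp hj).1 le_rfl

lemma iSup_ker_univ_eq :
    (⨆ j ∈ (Finset.univ : Finset (Fin n)),
        LinearMap.ker (f - lam j • (1 : Module.End R M))) =
      ⨆ j, LinearMap.ker (f - lam j • (1 : Module.End R M)) := by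
  refine le_antisymm (iSup₂_le fun j _ =>
    le_iSup (fun j => LinearMap.ker (f - lam j • (1 : Module.End R M))) j)
    (iSup_le fun j => le_iSup₂_of_le j (Finset.mem_univ j) le_rfl)

variable [IsLocalRing R] [Module.Free R M] [Module.Finite R M]

lemma ker_equiv_ring (hrank : Module.finrank R M = n)
    (hchar : f.charpoly = ∏ i : Fin n, (X - C (lam i)))
    (hdist : ∀ i j, i ≠ j → lam i - lam j ∉ IsLocalRing.maximalIdeal R) (k : Fin n) :
    Nonempty ((LinearMap.ker (f - lam k • (1 : Module.End R M))) ≃ₗ[R] R) := by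
  classical
  have hunit : ∀ i j : Fin n, i ≠ j → IsUnit (lam i - lam j) := fun i j h => by
    by_contra hu
    exact hdist i j h (by rwa [IsLocalRing.mem_maximalIdeal, mem_nonunits_iff])
  set K : Fin n → Submodule R M :=
    fun j => LinearMap.ker (f - lam j • (1 : Module.End R M)) with hK
  have hIndep : iSupIndep K := by
    intro j
    rw [disjoint_iff, iSup_ker_erase_eq f lam j]
    exact inf_ker_biSup_eq_bot f lam hunit _ j (Finset.notMem_erase j _)
  have hSup : (⨆ j, K j) = ⊤ := by
    rw [← iSup_ker_univ_eq f lam]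
    exact biSup_ker_eq_top f lam hchar hunit
  have hInternal : DirectSum.IsInternal K :=
    (DirectSum.isInternal_submodule_iff_iSupIndep_and_iSup_eq_top K).mpr ⟨hIndep, hSup⟩
  -- each kernel is finite free
  have hcompl : ∀ j, IsCompl (K j) (⨆ i ∈ Finset.univ.erase j, K i) := by
    intro j
    constructor
    · rw [disjoint_iff]
      exact inf_ker_biSup_eq_bot f lam hunit _ j (Finset.notMem_erase j _)
    · rw [codisjoint_iff, ← Finset.iSup_insert, Finset.insert_erase (Finset.mem_univ j)]
      exact biSup_ker_eq_top f lam hchar hunit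
  haveI hfin : ∀ j, Module.Finite R (K j) := fun j =>
    Module.Finite.of_surjective (Submodule.linearProjOfIsCompl _ _ (hcompl j))
      (fun y => ⟨(y : M), Submodule.linearProjOfIsCompl_apply_left (hcompl j) y⟩)
  haveI hproj : ∀ j, Module.Projective R (K j) := fun j =>
    Module.Projective.of_split (K j).subtype (Submodule.linearProjOfIsCompl _ _ (hcompl j))
      (by ext y; simp only [LinearMap.comp_apply, Submodule.subtype_apply, Submodule.linearProjOfIsCompl_apply_left, LinearMap.id_apply]; exact congrArg Subtype.val (Submodule.linearProjOfIsCompl_apply_left (hcompl j) y))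
  haveI hfree : ∀ j, Module.Free R (K j) := fun j =>
    haveI := Module.finitePresentation_of_projective R (K j)
    Module.free_of_flat_of_isLocalRing
  -- count ranks
  have hsum : ∑ j, Module.finrank R (K j) = n := by
    have e : (⨁ j, K j) ≃ₗ[R] M := LinearEquiv.ofBijective (DirectSum.coeLinearMap K) hInternal
    rw [← Module.finrank_directSum, e.finrank_eq, hrank]
  have hpos : ∀ j, 1 ≤ Module.finrank R (K j) := by
    intro j
    have hne : K j ≠ ⊥ := ker_ne_bot f lam hchar hdist j
    haveI : Nontrivial (K j) := Submodule.nontrivial_iff_ne_bot.mpr hne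
    have := Module.Free.chooseBasis R (K j)
    have hnonempty : Nonempty (Module.Free.ChooseBasisIndex R (K j)) := this.index_nonempty
    rw [Module.finrank_eq_card_chooseBasisIndex]
    exact Fintype.card_pos_iff.mpr hnonempty
  have hone : Module.finrank R (K k) = 1 := by
    by_contra hne
    have h2 : 2 ≤ Module.finrank R (K k) := by
      have := hpos k; omega
    have hrest : (Finset.univ.erase k).card ≤ ∑ j ∈ Finset.univ.erase k, Module.finrank R (K j) := by
      have := Finset.card_nsmul_le_sum (Finset.univ.erase k) (fun j => Module.finrank R (K j)) 1
        (fun x _ => hpos x)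
      simpa using this
    have hcard : (Finset.univ.erase k).card = n - 1 := by
      simp [Finset.card_erase_of_mem]
    have hsplit : Module.finrank R (K k) + ∑ j ∈ Finset.univ.erase k, Module.finrank R (K j) = n :=
      (Finset.add_sum_erase Finset.univ (fun j => Module.finrank R (K j))
        (Finset.mem_univ k)).trans hsum
    have hn1 : 1 ≤ n := by have := k.isLt; omega
    omega
  -- conclude
  obtain ⟨x, hx⟩ := Fintype.card_eq_one_iff.mp
    ((Module.finrank_eq_card_chooseBasisIndex R (K k)) ▸ hone)
  haveI : Unique (Module.Free.ChooseBasisIndex R (K k)) := ⟨⟨x⟩, hx⟩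
  exact ⟨(Module.Free.chooseBasis R (K k)).repr.trans
    (Finsupp.LinearEquiv.finsuppUnique R R _)⟩
end RankOne

/-- Over a commutative local ring `R`, let `f` be an endomorphism of a
free module `M` of rank `n ≥ 1` whose characteristic polynomial splits as `∏ (X - λᵢ)`
with the `λᵢ` pairwise distinct modulo the maximal ideal. Then there is a unique complete
flag `F` with `f (Fᵢ) ⊆ Fᵢ` and `(f - λᵢ) (Fᵢ) ⊆ Fᵢ₋₁`; explicitly
`Fᵢ = ker (f - λ₁) ⊕ ⋯ ⊕ ker (f - λᵢ)`. -/
theorem existsUnique_stable_flag_of_charpoly_split_local {R M : Type*} [CommRing R]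
    [IsLocalRing R] [AddCommGroup M] [Module R M] [Module.Free R M] [Module.Finite R M]
    (n : ℕ) (hn : 1 ≤ n) (hrank : Module.finrank R M = n)
    (f : Module.End R M) (lam : Fin n → R)
    (hchar : LinearMap.charpoly f = ∏ i : Fin n, (Polynomial.X - Polynomial.C (lam i)))
    (hdist : ∀ i j, i ≠ j → lam i - lam j ∉ IsLocalRing.maximalIdeal R) :
    (∃! F : Fin (n + 1) → Submodule R M, IsCompleteFlag F ∧
        ∀ i : Fin n, Submodule.map f (F i.succ) ≤ F i.succ ∧
          Submodule.map (f - lam i • (1 : Module.End R M)) (F i.succ) ≤ F i.castSucc) ∧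
      ∀ F : Fin (n + 1) → Submodule R M,
        (IsCompleteFlag F ∧
            ∀ i : Fin n, Submodule.map f (F i.succ) ≤ F i.succ ∧
              Submodule.map (f - lam i • (1 : Module.End R M)) (F i.succ) ≤ F i.castSucc) →
          ∀ j : Fin (n + 1), F j = ⨆ k : Fin n, ⨆ _ : (k : ℕ) < (j : ℕ),
            LinearMap.ker (f - lam k • (1 : Module.End R M)) := by
  classical
  have hunit : ∀ i j : Fin n, i ≠ j → IsUnit (lam i - lam j) := fun i j h => by
    by_contra hu
    exact hdist i j h (by rwa [IsLocalRing.mem_maximalIdeal, mem_nonunits_iff])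
  set K : Fin n → Submodule R M :=
    fun j => LinearMap.ker (f - lam j • (1 : Module.End R M)) with hK
  set G : Fin (n + 1) → Submodule R M :=
    fun j => ⨆ k : Fin n, ⨆ _ : (k : ℕ) < (j : ℕ), K k with hG
  -- basic facts about K
  have hKmem : ∀ (k : Fin n) {x : M}, x ∈ K k → f x = lam k • x := by
    intro k x hx
    have := LinearMap.mem_ker.mp hx
    rw [LinearMap.sub_apply, LinearMap.smul_apply, Module.End.one_apply, sub_eq_zero] at this
    exact this
  have hKf : ∀ (k : Fin n) {x : M}, x ∈ K k → f x ∈ K k := by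
    intro k x hx
    rw [hKmem k hx]
    exact (K k).smul_mem _ hx
  have hKsub : ∀ (k i : Fin n) {x : M}, x ∈ K k →
      (f - lam i • (1 : Module.End R M)) x = (lam k - lam i) • x := by
    intro k i x hx
    rw [LinearMap.sub_apply, LinearMap.smul_apply, Module.End.one_apply, hKmem k hx, ← sub_smul]
  have hannall : ∀ x : M, Polynomial.aeval f (∏ j ∈ Finset.univ,
      (Polynomial.X - Polynomial.C (lam j))) x = 0 := by
    intro x
    rw [show (∏ j ∈ Finset.univ, (Polynomial.X - Polynomial.C (lam j))) = f.charpoly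
      from hchar.symm, aeval_self_charpoly]
    rfl
  -- facts about G
  have hGfin : ∀ j : Fin (n + 1),
      G j = ⨆ k ∈ Finset.univ.filter (fun k : Fin n => (k : ℕ) < (j : ℕ)), K k := by
    intro j
    refine le_antisymm (iSup₂_le fun k hk =>
        le_iSup₂_of_le k (Finset.mem_filter.mpr ⟨Finset.mem_univ k, hk⟩) le_rfl)
      (iSup₂_le fun k hk => le_iSup₂_of_le k (Finset.mem_filter.mp hk).2 le_rfl)
  have hG0 : G 0 = ⊥ := by
    refine le_antisymm (iSup₂_le fun k hk => absurd hk (by simp)) bot_le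
  have hSupTop : (⨆ j, K j) = ⊤ := by
    rw [← iSup_ker_univ_eq f lam]
    exact biSup_ker_eq_top f lam hchar hunit
  have hGlast : G (Fin.last n) = ⊤ := by
    rw [← hSupTop]
    refine le_antisymm (iSup₂_le fun k _ => le_iSup K k) (iSup_le fun k => ?_)
    exact le_iSup₂_of_le k (by simp [Fin.val_last, k.isLt]) le_rfl
  have hGmono : Monotone G := by
    intro a b hab
    refine iSup₂_le fun k hk => le_iSup₂_of_le k (hk.trans_le (by exact_mod_cast hab)) le_rfl
  have hsucc : ∀ i : Fin n, G i.succ = K i ⊔ G i.castSucc := by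
    intro i
    refine le_antisymm (iSup₂_le fun k hk => ?_) (sup_le ?_ (iSup₂_le fun k hk => ?_))
    · rw [Fin.val_succ] at hk
      rcases Nat.lt_succ_iff_lt_or_eq.mp hk with h | h
      · exact le_sup_of_le_right (le_iSup₂_of_le k (by rwa [Fin.coe_castSucc]) le_rfl)
      · exact le_sup_of_le_left (le_of_eq (congrArg K (Fin.ext h)))
    · exact le_iSup₂_of_le i (by simp [Fin.val_succ]) le_rfl
    · rw [Fin.coe_castSucc] at hk
      exact le_iSup₂_of_le k (by rw [Fin.val_succ]; omega) le_rfl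
  have hdisj : ∀ i : Fin n, K i ⊓ G i.castSucc = ⊥ := by
    intro i
    rw [hGfin]
    exact inf_ker_biSup_eq_bot f lam hunit _ i (by simp)
  -- stability of G
  have hmapKle : ∀ (k : Fin n) (j : Fin (n + 1)), (k : ℕ) < (j : ℕ) → K k ≤ G j :=
    fun k j hk => le_iSup₂_of_le k hk le_rfl
  have hstab1 : ∀ j : Fin (n + 1), Submodule.map f (G j) ≤ G j := by
    intro j
    rintro x hx
    obtain ⟨y, hy, rfl⟩ := hx
    revert hy
    refine fun hy => ?_
    -- use that G j is a sup of f-stable submodules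
    have : G j ≤ Submodule.comap f (G j) := by
      refine iSup₂_le fun k hk => ?_
      intro z hz
      exact hmapKle k j hk (hKf k hz)
    exact this hy
  have hstab2 : ∀ i : Fin n,
      Submodule.map (f - lam i • (1 : Module.End R M)) (G i.succ) ≤ G i.castSucc := by
    intro i
    rintro x ⟨y, hy, rfl⟩
    have : G i.succ ≤ Submodule.comap (f - lam i • (1 : Module.End R M)) (G i.castSucc) := by
      refine iSup₂_le fun k hk => ?_
      intro z hz
      rw [Fin.val_succ] at hk
      rcases Nat.lt_succ_iff_lt_or_eq.mp hk with h | h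
      · have : (f - lam i • (1 : Module.End R M)) z = (lam k - lam i) • z := hKsub k i hz
        refine Submodule.mem_comap.mpr ?_
        rw [this]
        exact hmapKle k i.castSucc (by rwa [Fin.coe_castSucc]) ((K k).smul_mem _ hz)
      · have hki : k = i := Fin.ext h
        subst hki
        have : (f - lam k • (1 : Module.End R M)) z = 0 := LinearMap.mem_ker.mp hz
        refine Submodule.mem_comap.mpr ?_
        rw [this]
        exact Submodule.zero_mem _
    exact this hy
  -- flag quotients
  have hquot : ∀ i : Fin n, Nonempty
      ((↥(G i.succ) ⧸ (G i.castSucc).comap (G i.succ).subtype) ≃ₗ[R] R) := by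
    intro i
    obtain ⟨eK⟩ := ker_equiv_ring f lam hrank hchar hdist i
    rw [hsucc i]
    have h1 := LinearMap.quotientInfEquivSupQuotient (K i) (G i.castSucc)
    have h2 : Submodule.comap (K i).subtype ((K i) ⊓ G i.castSucc) = ⊥ := by
      rw [hdisj i, Submodule.comap_bot, Submodule.ker_subtype]
    exact ⟨h1.symm.trans ((Submodule.quotEquivOfEqBot _ h2).trans eK)⟩
  -- uniqueness
  have huniq : ∀ F : Fin (n + 1) → Submodule R M,
      (IsCompleteFlag F ∧
          ∀ i : Fin n, Submodule.map f (F i.succ) ≤ F i.succ ∧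
            Submodule.map (f - lam i • (1 : Module.End R M)) (F i.succ) ≤ F i.castSucc) →
        ∀ j : Fin (n + 1), F j = G j := by
    rintro F ⟨⟨h0, hlast, hmono, _⟩, hstab⟩ j
    have hFstable : ∀ (j' : Fin (n + 1)), ∀ x ∈ F j', f x ∈ F j' := by
      intro j'
      induction j' using Fin.cases with
      | zero => intro x hx; rw [h0] at hx ⊢; simp only [Submodule.mem_bot] at hx; simp [hx]
      | succ i => intro x hx; exact (hstab i).1 (Submodule.mem_map_of_mem hx)
    have hstep : ∀ (i : Fin n) (k : Fin n), k ≠ i → F i.succ ⊓ K k = F i.castSucc ⊓ K k := by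
      intro i k hki
      refine le_antisymm ?_ (inf_le_inf_right _ (hmono (Fin.castSucc_le_succ i)))
      rintro x ⟨hx1, hx2⟩
      refine ⟨?_, hx2⟩
      have h1 : (f - lam i • (1 : Module.End R M)) x ∈ F i.castSucc :=
        (hstab i).2 (Submodule.mem_map_of_mem hx1)
      rw [hKsub k i hx2] at h1
      obtain ⟨c, hc⟩ := (hunit k i hki).exists_left_inv
      have : x = c • ((lam k - lam i) • x) := by rw [smul_smul, hc, one_smul]
      rw [this]
      exact (F i.castSucc).smul_mem _ h1
    have hFK : ∀ (j' : Fin (n + 1)) (k : Fin n), (k : ℕ) < (j' : ℕ) → K k ≤ F j' := by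
      intro j'
      induction j' using Fin.reverseInduction with
      | last => intro k _; rw [hlast]; exact le_top
      | cast i IH =>
          intro k hk
          rw [Fin.coe_castSucc] at hk
          have hki : k ≠ i := fun h => by subst h; omega
          have h1 : K k ≤ F i.succ := IH k (by rw [Fin.val_succ]; omega)
          have h2 : K k ≤ F i.succ ⊓ K k := le_inf h1 le_rfl
          rw [hstep i k hki] at h2
          exact h2.trans inf_le_left
    have hFbot : ∀ (j' : Fin (n + 1)) (k : Fin n), (j' : ℕ) ≤ (k : ℕ) → F j' ⊓ K k = ⊥ := by
      intro j'
      induction j' using Fin.induction with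
      | zero => intro k _; rw [h0, bot_inf_eq]
      | succ i IH =>
          intro k hk
          rw [Fin.val_succ] at hk
          have hki : k ≠ i := fun h => by subst h; omega
          rw [hstep i k hki, IH k (by rw [Fin.coe_castSucc]; omega)]
    refine le_antisymm ?_ (iSup₂_le fun k hk => hFK j k hk)
    have hsplit := split_lemma f lam hunit Finset.univ (F j) (hFstable j)
      (fun x _ => hannall x)
    refine hsplit.trans (iSup₂_le fun k _ => ?_)
    by_cases hk : (k : ℕ) < (j : ℕ)
    · exact inf_le_right.trans (hmapKle k j hk)
    · rw [hFbot j k (by omega)]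
      exact bot_le
  refine ⟨⟨G, ⟨⟨hG0, hGlast, hGmono, hquot⟩, fun i => ⟨hstab1 i.succ, hstab2 i⟩⟩, ?_⟩, huniq⟩
  intro F hF
  funext j
  exact huniq F hF j
end

section
/- Let R be a commutative local ring with maximal ideal m, let M be a free R-module of rank n ≥ 1 with a basis (b_1, …, b_n), and let f be an R-linear endomorphism of M with f(b_i) = λ_i · b_i for all i, where λ_1, …, λ_n ∈ R have pairwise distinct images in R/m. Let F_• be a complete flag on M such that f(F_j) ⊆ F_j and (f − λ_j)(F_j) ⊆ F_{j−1} for all 1 ≤ j ≤ n, and let (a_j)_{1≤j≤n} be a basis of the flag F_•. Writing a_j = ∑_{i=1}^n a_{ij} b_i, the matrix (a_{ij})_{1≤i,j≤n} is upper triangular (a_{ij} = 0 for i > j) with diagonal entries a_{jj} ∈ R^×; consequently (b_1, …, b_n) is also a basis of the flag F_•. -/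
/-- Over a commutative local ring `R`, let `b` be an eigenbasis of an
endomorphism `f` with eigenvalues `λᵢ` pairwise distinct modulo the maximal ideal, let
`F` be a complete flag with `f (Fⱼ) ⊆ Fⱼ` and `(f - λⱼ)(Fⱼ) ⊆ Fⱼ₋₁`, and let `a` be a
flag basis of `F`. Then the matrix of the `a j` in the basis `b` is upper triangular
with unit diagonal entries; consequently `b` is also a flag basis of `F`. -/
theorem flag_basis_upper_triangular_of_eigenbasis {R M : Type*} [CommRing R]
    [IsLocalRing R] [AddCommGroup M] [Module R M]
    (n : ℕ) (hn : 1 ≤ n) (b : Module.Basis (Fin n) R M)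
    (f : Module.End R M) (lam : Fin n → R)
    (hf : ∀ i, f (b i) = lam i • b i)
    (hdist : ∀ i j, i ≠ j → lam i - lam j ∉ IsLocalRing.maximalIdeal R)
    (F : Fin (n + 1) → Submodule R M) (hF : IsCompleteFlag F)
    (hstab : ∀ j : Fin n, Submodule.map f (F j.succ) ≤ F j.succ ∧
      Submodule.map (f - lam j • (1 : Module.End R M)) (F j.succ) ≤ F j.castSucc)
    (a : Fin n → M) (ha : IsFlagBasis F a) :
    (∀ i j : Fin n, j < i → b.repr (a j) i = 0) ∧
      (∀ j : Fin n, IsUnit (b.repr (a j) j)) ∧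
      IsFlagBasis F (fun i => b i) := by
  obtain ⟨hF0, hFtop, hmono, -⟩ := hF
  -- eigenvalue coordinates
  have hrepr : ∀ (x : M) (i : Fin n), b.repr (f x) i = lam i * b.repr x i := by
    intro x i
    have h : ((Finsupp.lapply i).comp (b.repr.toLinearMap.comp f) : M →ₗ[R] R)
        = lam i • ((Finsupp.lapply i).comp b.repr.toLinearMap) := by
      apply b.ext
      intro k
      simp [hf k, Module.Basis.repr_self, Finsupp.single_apply]
      rcases eq_or_ne k i with rfl | hk
      · simp
      · simp [hk, Finsupp.single_eq_of_ne' hk]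
    simpa using LinearMap.congr_fun h x
  have hrepr' : ∀ (j : Fin n) (x : M) (i : Fin n),
      b.repr ((f - lam j • (1 : Module.End R M)) x) i = (lam i - lam j) * b.repr x i := by
    intro j x i
    simp [LinearMap.sub_apply, hrepr, sub_mul, mul_comm]
  have hunit : ∀ i j : Fin n, i ≠ j → IsUnit (lam i - lam j) := by
    intro i j h
    have := hdist i j h
    rw [IsLocalRing.mem_maximalIdeal, mem_nonunits_iff, not_not] at this
    exact this
  set S : Fin (n + 1) → Submodule R M :=
    fun j => Submodule.span R (b '' {i : Fin n | (i : ℕ) < (j : ℕ)}) with hSdef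
  have hmemS : ∀ (j : Fin (n + 1)) (x : M),
      x ∈ S j ↔ ∀ i : Fin n, (j : ℕ) ≤ (i : ℕ) → b.repr x i = 0 := by
    intro j x
    rw [hSdef]
    rw [Module.Basis.mem_span_image]
    constructor
    · intro h i hi
      by_contra h0
      have := h (Finsupp.mem_support_iff.2 h0)
      simp only [Set.mem_setOf_eq] at this
      omega
    · intro h i hi
      rw [Finset.mem_coe, Finsupp.mem_support_iff] at hi
      simp only [Set.mem_setOf_eq]
      by_contra h0
      exact hi (h i (by omega))
  have stepA : ∀ j : Fin (n + 1), F j ≤ S j := by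
    intro j
    induction j using Fin.induction with
    | zero => rw [hF0]; exact bot_le
    | succ i ih =>
      intro x hx
      rw [hmemS]
      intro k hk
      have hy : (f - lam i • (1 : Module.End R M)) x ∈ F i.castSucc :=
        (hstab i).2 ⟨x, hx, rfl⟩
      have hy' := (hmemS _ _).1 (ih hy) k (by
        simp only [Fin.coe_castSucc]
        have : (i : ℕ) + 1 ≤ (k : ℕ) := by simpa using hk
        omega)
      rw [hrepr'] at hy'
      have hne : k ≠ i := by
        have : (i : ℕ) + 1 ≤ (k : ℕ) := by simpa using hk
        intro h; subst h; omega
      exact ((hunit k i hne).mul_right_eq_zero).1 hy'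
  have stepB : ∀ j : Fin (n + 1), S j ≤ F j := by
    intro j
    induction j using Fin.reverseInduction with
    | last => rw [hFtop]; exact le_top
    | cast i ih =>
      rw [hSdef]
      rw [Submodule.span_le]
      rintro x ⟨k, hk, rfl⟩
      simp only [Set.mem_setOf_eq, Fin.coe_castSucc] at hk
      have hbk : b k ∈ F i.succ := by
        apply ih
        apply Submodule.subset_span
        exact ⟨k, by simp; omega, rfl⟩
      have hmem : (f - lam i • (1 : Module.End R M)) (b k) ∈ F i.castSucc :=
        (hstab i).2 ⟨b k, hbk, rfl⟩
      have heq : (f - lam i • (1 : Module.End R M)) (b k) = (lam k - lam i) • b k := by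
        simp [LinearMap.sub_apply, hf k, sub_smul]
      rw [heq] at hmem
      have hne : k ≠ i := by intro h; subst h; omega
      obtain ⟨u, hu⟩ := hunit k i hne
      have h2 : ((u⁻¹ : Rˣ) : R) • ((lam k - lam i) • b k) ∈ F i.castSucc :=
        Submodule.smul_mem _ _ hmem
      rwa [← hu, smul_smul, u.inv_mul, one_smul] at h2
  have hFS : ∀ j, F j = S j := fun j => le_antisymm (stepA j) (stepB j)
  -- Part 1
  have part1 : ∀ i j : Fin n, j < i → b.repr (a j) i = 0 := by
    intro i j hij
    obtain ⟨haj, -⟩ := ha j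
    rw [hFS] at haj
    exact (hmemS _ _).1 haj i (by
      have : (j : ℕ) < (i : ℕ) := hij
      simp only [Fin.val_succ]; omega)
  have hbj : ∀ j : Fin n, b j ∈ F j.succ := by
    intro j
    rw [hFS]
    exact Submodule.subset_span ⟨j, by simp, rfl⟩
  -- Part 2
  have part2 : ∀ j : Fin n, IsUnit (b.repr (a j) j) := by
    intro j
    obtain ⟨haj, hspan⟩ := ha j
    have hmem : (Submodule.Quotient.mk ⟨b j, hbj j⟩ :
        ↥(F j.succ) ⧸ (F j.castSucc).comap (F j.succ).subtype) ∈
        Submodule.span R {(Submodule.Quotient.mk ⟨a j, haj⟩ :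
          ↥(F j.succ) ⧸ (F j.castSucc).comap (F j.succ).subtype)} := by
      rw [hspan]; trivial
    rw [Submodule.mem_span_singleton] at hmem
    obtain ⟨r, hr⟩ := hmem
    rw [← Submodule.Quotient.mk_smul, Submodule.Quotient.eq] at hr
    have hsub : r • a j - b j ∈ F j.castSucc := hr
    rw [hFS] at hsub
    have := (hmemS _ _).1 hsub j (by simp)
    simp only [map_sub, map_smul, Finsupp.sub_apply, Finsupp.smul_apply,
      Module.Basis.repr_self, Finsupp.single_eq_same, smul_eq_mul] at this
    have hone : r * b.repr (a j) j = 1 := by linear_combination this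
    exact IsUnit.of_mul_eq_one (a := b.repr (a j) j) r (by rw [mul_comm]; exact hone)
  -- Part 3
  refine ⟨part1, part2, ?_⟩
  intro j
  refine ⟨hbj j, ?_⟩
  obtain ⟨haj, hspan⟩ := ha j
  rw [eq_top_iff, ← hspan, Submodule.span_le, Set.singleton_subset_iff]
  have hdiff : a j - b.repr (a j) j • b j ∈ F j.castSucc := by
    rw [hFS, hmemS]
    intro i hi
    simp only [map_sub, map_smul, Finsupp.sub_apply, Finsupp.smul_apply,
      Module.Basis.repr_self, smul_eq_mul]
    rcases eq_or_ne i j with rfl | hne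
    · simp
    · have hji : (j : ℕ) < (i : ℕ) := by
        simp only [Fin.coe_castSucc] at hi
        rcases lt_or_eq_of_le hi with h | h
        · exact h
        · exact absurd (Fin.ext h.symm) hne
      rw [part1 i j hji, Finsupp.single_eq_of_ne' (by exact fun h => hne h.symm)]
      ring
  have hmk : (Submodule.Quotient.mk ⟨a j, haj⟩ :
      ↥(F j.succ) ⧸ (F j.castSucc).comap (F j.succ).subtype)
      = b.repr (a j) j • Submodule.Quotient.mk ⟨b j, hbj j⟩ := by
    rw [← Submodule.Quotient.mk_smul, Submodule.Quotient.eq]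
    exact hdiff
  rw [SetLike.mem_coe, hmk]
  exact Submodule.smul_mem _ _ (Submodule.mem_span_singleton_self _)
end

section
/- Let n ≥ 1 and let (w_1, w_2) be a good pair of permutations of {1, …, n}. Let h : {1, …, n} → ℤ be strictly increasing and let χ : {1, …, n} → ℚ be constant on each orbit of w_2 w_1^{-1}. Define λ ∈ ℚ^n by λ_i = h_i + i − 1 + χ_{w_2(i)}. Then w_1·λ is strongly linked to w_2·λ; that is, there exist transpositions σ_1, …, σ_s of {1, …, n} (s ≥ 0) such that w_1·λ = (σ_s ⋯ σ_1)·(w_2·λ) and (σ_k ⋯ σ_1)·(w_2·λ) < (σ_{k−1} ⋯ σ_1)·(w_2·λ) in the dominance order, for all 1 ≤ k ≤ s. -/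
open Finset

/-- The number of inversions of a permutation of `Fin n`. -/
def invCount {n : ℕ} (u : Equiv.Perm (Fin n)) : ℕ :=
  (Finset.univ.filter fun p : Fin n × Fin n => p.1 < p.2 ∧ u p.2 < u p.1).card

/-- A pair `(w₁, w₂)` of permutations is *good* if `w₂ = τ_r ⋯ τ_1 w₁` for transpositions
`τ_k`, each swapping two elements in a common orbit of `w₁ w₂⁻¹`, such that the number of
inversions strictly increases along the partial products. -/
def IsGoodPair {n : ℕ} (w₁ w₂ : Equiv.Perm (Fin n)) : Prop :=
  ∃ l : List (Equiv.Perm (Fin n)),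
    (∀ τ ∈ l, ∃ a b : Fin n, a ≠ b ∧ τ = Equiv.swap a b ∧ (w₁ * w₂⁻¹).SameCycle a b) ∧
    w₂ = l.reverse.prod * w₁ ∧
    ∀ k < l.length,
      invCount ((l.take k).reverse.prod * w₁) < invCount ((l.take (k + 1)).reverse.prod * w₁)

/-- The dot action of a permutation `u` on `λ ∈ ℚⁿ`: `(u · λ)_i = λ_{u⁻¹ i} + i - u⁻¹ i`. -/
def dotAction {n : ℕ} (u : Equiv.Perm (Fin n)) (lam : Fin n → ℚ) : Fin n → ℚ :=
  fun i => lam (u⁻¹ i) + (i : ℚ) - ((u⁻¹ i : Fin n) : ℚ)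

/-- `μ < ν` in the dominance order: `ν - μ` is a nonzero `ℚ≥0`-linear combination of the
simple roots `e_k - e_{k+1}`. -/
def DomLt {n : ℕ} (μ ν : Fin n → ℚ) : Prop :=
  μ ≠ ν ∧ ∃ c : Fin n → ℚ, (∀ k, 0 ≤ c k) ∧ (∀ k : Fin n, (k : ℕ) + 1 = n → c k = 0) ∧
    ∀ j : Fin n, ν j - μ j =
      ∑ k : Fin n, c k * ((if j = k then 1 else 0) - (if (j : ℕ) = (k : ℕ) + 1 then 1 else 0))

/-- `μ` is strongly linked to `ν`: `μ = (σ_s ⋯ σ_1) · ν` for transpositions `σ_k` such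
that each step strictly decreases in the dominance order. -/
def StronglyLinked {n : ℕ} (μ ν : Fin n → ℚ) : Prop :=
  ∃ l : List (Equiv.Perm (Fin n)),
    (∀ τ ∈ l, ∃ a b : Fin n, a ≠ b ∧ τ = Equiv.swap a b) ∧
    μ = dotAction l.reverse.prod ν ∧
    ∀ k < l.length,
      DomLt (dotAction ((l.take (k + 1)).reverse.prod) ν)
        (dotAction ((l.take k).reverse.prod) ν)

lemma dotAction_mul {n : ℕ} (u v : Equiv.Perm (Fin n)) (lam : Fin n → ℚ) :
    dotAction (u * v) lam = dotAction u (dotAction v lam) := by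
  funext i
  simp only [dotAction, mul_inv_rev, Equiv.Perm.mul_apply]
  ring

lemma prod_mul_reverse_prod {n : ℕ} (L : List (Equiv.Perm (Fin n)))
    (hL : ∀ τ ∈ L, τ * τ = 1) : L.prod * L.reverse.prod = 1 := by
  induction L with
  | nil => simp
  | cons τ t ih =>
    have h1 : t.prod * t.reverse.prod = 1 := ih fun σ hσ => hL σ (List.mem_cons_of_mem _ hσ)
    have h2 := hL τ List.mem_cons_self
    simp only [List.prod_cons, List.reverse_cons, List.prod_append, List.prod_cons,
      List.prod_nil, mul_one]
    calc τ * t.prod * (t.reverse.prod * τ) = τ * (t.prod * t.reverse.prod) * τ := by group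
    _ = τ * τ := by rw [h1, mul_one]
    _ = 1 := h2

lemma sameCycle_list_prod {n : ℕ} (g : Equiv.Perm (Fin n)) (L : List (Equiv.Perm (Fin n)))
    (hL : ∀ τ ∈ L, ∀ x, g.SameCycle x (τ x)) : ∀ x, g.SameCycle x (L.prod x) := by
  induction L with
  | nil => intro x; simp [Equiv.Perm.SameCycle.refl]
  | cons τ t ih =>
    intro x
    have h1 : g.SameCycle x (t.prod x) := ih (fun σ hσ => hL σ (List.mem_cons_of_mem _ hσ)) x
    have h2 : g.SameCycle (t.prod x) (τ (t.prod x)) := hL τ List.mem_cons_self _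
    simpa [Equiv.Perm.mul_apply] using h1.trans h2

lemma sameCycle_inv_apply {n : ℕ} (g P : Equiv.Perm (Fin n))
    (hP : ∀ x, g.SameCycle x (P x)) : ∀ x, g.SameCycle x (P⁻¹ x) := by
  intro x
  have := hP (P⁻¹ x)
  rw [show P (P⁻¹ x) = x from P.apply_symm_apply x] at this
  exact this.symm

lemma invCount_swap_gt {n : ℕ} (u : Equiv.Perm (Fin n)) {a b : Fin n} (hab : a < b)
    (hpq : u⁻¹ a < u⁻¹ b) : invCount u < invCount (Equiv.swap a b * u) := by
  classical
  set p := u⁻¹ a with hp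
  set q := u⁻¹ b with hq
  have hupa : u p = a := u.apply_symm_apply a
  have huqb : u q = b := u.apply_symm_apply b
  have keya : ∀ y, u y = a ↔ y = p := by
    intro y
    constructor
    · intro hy; exact u.injective (hy.trans hupa.symm)
    · rintro rfl; exact hupa
  have keyb : ∀ y, u y = b ↔ y = q := by
    intro y
    constructor
    · intro hy; exact u.injective (hy.trans huqb.symm)
    · rintro rfl; exact huqb
  have hs1 : ∀ y, y = p → Equiv.swap a b (u y) = b := by
    rintro y rfl; rw [hupa]; exact Equiv.swap_apply_left a b
  have hs2 : ∀ y, y = q → Equiv.swap a b (u y) = a := by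
    rintro y rfl; rw [huqb]; exact Equiv.swap_apply_right a b
  have hs3 : ∀ y, y ≠ p → y ≠ q → Equiv.swap a b (u y) = u y := by
    intro y h1 h2
    exact Equiv.swap_apply_of_ne_of_ne (fun hc => h1 ((keya y).1 hc)) (fun hc => h2 ((keyb y).1 hc))
  set S₁ : Finset (Fin n × Fin n) :=
    Finset.univ.filter fun x : Fin n × Fin n => x.1 < x.2 ∧ u x.2 < u x.1 with hS₁
  set S₂ : Finset (Fin n × Fin n) :=
    Finset.univ.filter fun x : Fin n × Fin n =>
      x.1 < x.2 ∧ (Equiv.swap a b * u) x.2 < (Equiv.swap a b * u) x.1 with hS₂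
  have hmemS₂ : ∀ x : Fin n × Fin n,
      x ∈ S₂ ↔ x.1 < x.2 ∧ Equiv.swap a b (u x.2) < Equiv.swap a b (u x.1) := by
    intro x; rw [hS₂, Finset.mem_filter]; simp [Equiv.Perm.mul_apply]
  have hmemS₁ : ∀ x : Fin n × Fin n, x ∈ S₁ ↔ x.1 < x.2 ∧ u x.2 < u x.1 := by
    intro x; simp [hS₁]
  set φ : Fin n × Fin n → Fin n × Fin n := fun x =>
    if x.2 = p ∧ u x.1 < b then (x.1, q)
    else if x.1 = q ∧ a < u x.2 then (p, x.2)
    else x with hφ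
  -- image is inside S₂
  have himg : S₁.image φ ⊆ S₂ := by
    intro z hz
    obtain ⟨y, hy, rfl⟩ := Finset.mem_image.mp hz
    obtain ⟨hlt, hinv⟩ := (hmemS₁ y).1 hy
    rw [hmemS₂]
    by_cases c1 : y.2 = p ∧ u y.1 < b
    · have hy1p : y.1 ≠ p := ne_of_lt (c1.1 ▸ hlt)
      have hy1q : y.1 ≠ q := ne_of_lt (lt_trans (c1.1 ▸ hlt) hpq)
      have hua : a < u y.1 := by
        have := hinv; rw [c1.1, hupa] at this; exact this
      simp only [hφ, if_pos c1]
      refine ⟨lt_trans (c1.1 ▸ hlt) hpq, ?_⟩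
      rw [hs2 q rfl, hs3 y.1 hy1p hy1q]
      exact hua
    · by_cases c2 : y.1 = q ∧ a < u y.2
      · have hub : u y.2 < b := by
          have := hinv; rw [c2.1, huqb] at this; exact this
        have hy2p : y.2 ≠ p := by
          intro hc
          have hcc := c2.2
          rw [hc, hupa] at hcc
          exact lt_irrefl a hcc
        have hy2q : y.2 ≠ q := ne_of_gt (c2.1 ▸ hlt)
        simp only [hφ, if_neg c1, if_pos c2]
        refine ⟨lt_trans hpq (c2.1 ▸ hlt), ?_⟩
        rw [hs1 p rfl, hs3 y.2 hy2p hy2q]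
        exact hub
      · simp only [hφ, if_neg c1, if_neg c2]
        refine ⟨hlt, ?_⟩
        push_neg at c1 c2
        by_cases h2p : y.2 = p
        · -- u y.1 ≥ b, in fact > b since y.1 ≠ q
          have hge : b ≤ u y.1 := c1 h2p
          have hne : u y.1 ≠ b := fun hc => by
            have := (keyb y.1).1 hc
            rw [this, h2p] at hlt
            exact absurd (lt_trans hlt hpq) (lt_irrefl q)
          have h1p : y.1 ≠ p := ne_of_lt (h2p ▸ hlt)
          have h1q : y.1 ≠ q := fun hc => hne (hc ▸ huqb)
          rw [hs1 y.2 h2p, hs3 y.1 h1p h1q]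
          exact lt_of_le_of_ne hge (Ne.symm hne)
        · by_cases h1q : y.1 = q
          · have hle : u y.2 ≤ a := c2 h1q
            have hne : u y.2 ≠ a := fun hc => h2p ((keya y.2).1 hc)
            have h2q : y.2 ≠ q := ne_of_gt (h1q ▸ hlt)
            rw [hs2 y.1 h1q, hs3 y.2 h2p h2q]
            exact lt_of_le_of_ne hle hne
          · by_cases h2q : y.2 = q
            · -- u y.1 > b
              have : b < u y.1 := by
                have := hinv; rw [h2q, huqb] at this; exact this
              have h1p : y.1 ≠ p := by
                intro hc
                rw [hc, hupa] at this
                exact absurd hab (not_lt.mpr (le_of_lt this))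
              have h1q' : y.1 ≠ q := ne_of_lt (h2q ▸ hlt)
              rw [hs2 y.2 h2q, hs3 y.1 h1p h1q']
              exact lt_trans hab this
            · by_cases h1p : y.1 = p
              · have : u y.2 < a := by
                  have := hinv; rw [h1p, hupa] at this; exact this
                rw [hs1 y.1 h1p, hs3 y.2 h2p h2q]
                exact lt_trans this hab
              · rw [hs3 y.1 h1p h1q, hs3 y.2 h2p h2q]
                exact hinv
  -- injectivity
  have hinj : Set.InjOn φ ↑S₁ := by
    intro x hx y hy hxy
    obtain ⟨hxlt, hxinv⟩ := (hmemS₁ x).1 hx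
    obtain ⟨hylt, hyinv⟩ := (hmemS₁ y).1 hy
    simp only [hφ] at hxy
    by_cases cx1 : x.2 = p ∧ u x.1 < b <;> by_cases cy1 : y.2 = p ∧ u y.1 < b
    · rw [if_pos cx1, if_pos cy1, Prod.mk.injEq] at hxy
      exact Prod.ext hxy.1 (cx1.1.trans cy1.1.symm)
    · rw [if_pos cx1] at hxy
      by_cases cy2 : y.1 = q ∧ a < u y.2
      · rw [if_neg cy1, if_pos cy2, Prod.mk.injEq] at hxy
        exfalso
        have h1 : x.1 = p := hxy.1
        have := hxlt
        rw [cx1.1, ← h1] at this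
        exact lt_irrefl _ this
      · rw [if_neg cy1, if_neg cy2] at hxy
        exfalso
        have h2 : y.2 = q := by rw [← hxy]
        have h1 : x.1 = y.1 := by rw [← hxy]
        have : b < u y.1 := by
          have := hyinv; rw [h2, huqb] at this; exact this
        rw [← h1] at this
        exact absurd cx1.2 (not_lt.mpr (le_of_lt this))
    · by_cases cx2 : x.1 = q ∧ a < u x.2
      · rw [if_neg cx1, if_pos cx2, if_pos cy1, Prod.mk.injEq] at hxy
        exfalso
        have h1 : y.1 = p := hxy.1.symm
        have := hylt
        rw [cy1.1, ← h1] at this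
        exact lt_irrefl _ this
      · rw [if_neg cx1, if_neg cx2, if_pos cy1] at hxy
        exfalso
        have h2 : x.2 = q := by rw [hxy]
        have h1 : y.1 = x.1 := by rw [hxy]
        have : b < u x.1 := by
          have := hxinv; rw [h2, huqb] at this; exact this
        rw [← h1] at this
        exact absurd cy1.2 (not_lt.mpr (le_of_lt this))
    · by_cases cx2 : x.1 = q ∧ a < u x.2 <;> by_cases cy2 : y.1 = q ∧ a < u y.2
      · rw [if_neg cx1, if_pos cx2, if_neg cy1, if_pos cy2, Prod.mk.injEq] at hxy
        exact Prod.ext (cx2.1.trans cy2.1.symm) hxy.2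
      · rw [if_neg cx1, if_pos cx2, if_neg cy1, if_neg cy2] at hxy
        exfalso
        have h1 : y.1 = p := by rw [← hxy]
        have h2 : y.2 = x.2 := by rw [← hxy]
        have : u y.2 < a := by
          have := hyinv; rw [h1, hupa] at this; exact this
        rw [h2] at this
        exact absurd cx2.2 (not_lt.mpr (le_of_lt this))
      · rw [if_neg cx1, if_neg cx2, if_neg cy1, if_pos cy2] at hxy
        exfalso
        have h1 : x.1 = p := by rw [hxy]
        have h2 : x.2 = y.2 := by rw [hxy]
        have : u x.2 < a := by
          have := hxinv; rw [h1, hupa] at this; exact this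
        rw [h2] at this
        exact absurd cy2.2 (not_lt.mpr (le_of_lt this))
      · rw [if_neg cx1, if_neg cx2, if_neg cy1, if_neg cy2] at hxy
        exact hxy
  -- (p,q) ∈ S₂ but not in the image
  have hpqS₂ : (p, q) ∈ S₂ := by
    rw [hmemS₂]
    refine ⟨hpq, ?_⟩
    rw [hs2 q rfl, hs1 p rfl]
    exact hab
  have hpqnot : (p, q) ∉ S₁.image φ := by
    intro hc
    obtain ⟨y, hy, hyeq⟩ := Finset.mem_image.mp hc
    obtain ⟨hylt, hyinv⟩ := (hmemS₁ y).1 hy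
    simp only [hφ] at hyeq
    by_cases c1 : y.2 = p ∧ u y.1 < b
    · rw [if_pos c1, Prod.mk.injEq] at hyeq
      have h1 : y.1 = p := hyeq.1
      have := hylt
      rw [c1.1, ← h1] at this
      exact lt_irrefl _ this
    · by_cases c2 : y.1 = q ∧ a < u y.2
      · rw [if_neg c1, if_pos c2, Prod.mk.injEq] at hyeq
        have h2 : y.2 = q := hyeq.2
        have := hylt
        rw [c2.1, ← h2] at this
        exact lt_irrefl _ this
      · rw [if_neg c1, if_neg c2] at hyeq
        rw [hyeq] at hyinv
        simp only [hupa, huqb] at hyinv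
        exact absurd hab (not_lt.mpr (le_of_lt hyinv))
  have hss : S₁.image φ ⊂ S₂ := ⟨himg, fun hc => hpqnot (hc hpqS₂)⟩
  calc invCount u = S₁.card := rfl
  _ = (S₁.image φ).card := (Finset.card_image_of_injOn hinj).symm
  _ < S₂.card := Finset.card_lt_card hss
  _ = invCount (Equiv.swap a b * u) := rfl

lemma orient {n : ℕ} (u : Equiv.Perm (Fin n)) {a b : Fin n} (hab : a < b)
    (hinv : invCount u < invCount (Equiv.swap a b * u)) : u⁻¹ a < u⁻¹ b := by
  rcases lt_trichotomy (u⁻¹ a) (u⁻¹ b) with hlt | heq | hgt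
  · exact hlt
  · exact absurd (u⁻¹.injective heq) (ne_of_lt hab)
  · exfalso
    set u' := Equiv.swap a b * u with hu'
    have h1 : u'⁻¹ a = u⁻¹ b := by
      rw [hu', mul_inv_rev, Equiv.Perm.mul_apply]
      congr 1
      rw [Equiv.swap_inv, Equiv.swap_apply_left]
    have h2 : u'⁻¹ b = u⁻¹ a := by
      rw [hu', mul_inv_rev, Equiv.Perm.mul_apply]
      congr 1
      rw [Equiv.swap_inv, Equiv.swap_apply_right]
    have key := invCount_swap_gt u' hab (by rw [h1, h2]; exact hgt)
    have huu : Equiv.swap a b * u' = u := by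
      rw [hu', ← mul_assoc, Equiv.swap_mul_self, one_mul]
    rw [huu] at key
    exact lt_asymm hinv key

lemma domLt_step {n : ℕ} (u : Equiv.Perm (Fin n)) {a b : Fin n} (hab : a < b)
    (lam : Fin n → ℚ)
    (hδ : 0 < (lam (u⁻¹ b) - ((u⁻¹ b : Fin n) : ℚ)) - (lam (u⁻¹ a) - ((u⁻¹ a : Fin n) : ℚ))) :
    DomLt (dotAction u lam) (dotAction (Equiv.swap a b * u) lam) := by
  classical
  set p := u⁻¹ a with hp
  set q := u⁻¹ b with hq
  set δ : ℚ := (lam q - (q : ℚ)) - (lam p - (p : ℚ)) with hδdef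
  have hdiff : ∀ j, dotAction (Equiv.swap a b * u) lam j - dotAction u lam j =
      if j = a then δ else if j = b then -δ else 0 := by
    intro j
    have hinv' : (Equiv.swap a b * u)⁻¹ j = u⁻¹ (Equiv.swap a b j) := by
      rw [mul_inv_rev, Equiv.Perm.mul_apply, Equiv.swap_inv]
    by_cases hja : j = a
    · subst hja
      rw [if_pos rfl]
      simp only [dotAction, hinv', Equiv.swap_apply_left]
      rw [← hq, ← hp, hδdef]; ring
    · by_cases hjb : j = b
      · subst hjb
        rw [if_neg hja, if_pos rfl]
        simp only [dotAction, hinv', Equiv.swap_apply_right]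
        rw [← hq, ← hp, hδdef]; ring
      · rw [if_neg hja, if_neg hjb]
        simp only [dotAction, hinv', Equiv.swap_apply_of_ne_of_ne hja hjb]
        ring
  have hδpos : 0 < δ := hδ
  constructor
  · intro hcon
    have := hdiff a
    rw [← hcon, sub_self, if_pos rfl] at this
    exact absurd this.symm (ne_of_gt hδpos)
  · refine ⟨fun k => if (a : ℕ) ≤ (k : ℕ) ∧ (k : ℕ) < (b : ℕ) then δ else 0, ?_, ?_, ?_⟩
    · intro k
      dsimp only
      split_ifs with hk
      · exact le_of_lt hδpos
      · exact le_refl 0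
    · intro k hk
      have hbn : (b : ℕ) < n := b.isLt
      dsimp only
      rw [if_neg (show ¬((a : ℕ) ≤ (k : ℕ) ∧ (k : ℕ) < (b : ℕ)) by omega)]
    · intro j
      dsimp only
      rw [hdiff j]
      have hsum1 : ∑ k : Fin n,
          (if (a : ℕ) ≤ (k : ℕ) ∧ (k : ℕ) < (b : ℕ) then δ else 0) *
            (if j = k then (1:ℚ) else 0) =
          (if (a : ℕ) ≤ (j : ℕ) ∧ (j : ℕ) < (b : ℕ) then δ else 0) := by
        rw [Finset.sum_eq_single j]
        · rw [if_pos rfl, mul_one]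
        · intro k _ hk
          have : j ≠ k := fun hc => hk hc.symm
          simp [this]
        · intro hc; exact absurd (Finset.mem_univ j) hc
      have hsum2 : ∑ k : Fin n,
          (if (a : ℕ) ≤ (k : ℕ) ∧ (k : ℕ) < (b : ℕ) then δ else 0) *
            (if (j : ℕ) = (k : ℕ) + 1 then (1:ℚ) else 0) =
          (if (a : ℕ) + 1 ≤ (j : ℕ) ∧ (j : ℕ) ≤ (b : ℕ) then δ else 0) := by
        by_cases hj0 : (j : ℕ) = 0
        · rw [if_neg (show ¬((a : ℕ) + 1 ≤ (j : ℕ) ∧ (j : ℕ) ≤ (b : ℕ)) by omega)]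
          apply Finset.sum_eq_zero
          intro k _
          have : ¬((j : ℕ) = (k : ℕ) + 1) := by omega
          simp [this]
        · have hjn : (j : ℕ) - 1 < n := by omega
          rw [Finset.sum_eq_single (⟨(j : ℕ) - 1, hjn⟩ : Fin n)]
          · simp only [Fin.val_mk]
            rw [if_pos (show (j : ℕ) = ((j : ℕ) - 1) + 1 by omega), mul_one]
            split_ifs with g1 g2 g2 <;> first | rfl | omega
          · intro k _ hk
            have hne : ¬((j : ℕ) = (k : ℕ) + 1) := by
              intro hc
              exact hk (Fin.ext (by simp only [Fin.val_mk]; omega))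
            simp [hne]
          · intro hc; exact absurd (Finset.mem_univ _) hc
      have hexp : ∀ k : Fin n,
          (if (a : ℕ) ≤ (k : ℕ) ∧ (k : ℕ) < (b : ℕ) then δ else 0) *
            ((if j = k then (1:ℚ) else 0) - (if (j : ℕ) = (k : ℕ) + 1 then 1 else 0)) =
          (if (a : ℕ) ≤ (k : ℕ) ∧ (k : ℕ) < (b : ℕ) then δ else 0) * (if j = k then (1:ℚ) else 0)
          - (if (a : ℕ) ≤ (k : ℕ) ∧ (k : ℕ) < (b : ℕ) then δ else 0) *
            (if (j : ℕ) = (k : ℕ) + 1 then (1:ℚ) else 0) := fun k => by ring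
      rw [Finset.sum_congr rfl (fun k _ => hexp k), Finset.sum_sub_distrib, hsum1, hsum2]
      have hab' : (a : ℕ) < (b : ℕ) := hab
      have hjab : j = a ↔ (j : ℕ) = (a : ℕ) := ⟨fun hc => by rw [hc], fun hc => Fin.ext hc⟩
      have hjbb : j = b ↔ (j : ℕ) = (b : ℕ) := ⟨fun hc => by rw [hc], fun hc => Fin.ext hc⟩
      by_cases h1 : j = a
      · rw [if_pos h1, if_pos (show (a : ℕ) ≤ (j : ℕ) ∧ (j : ℕ) < (b : ℕ) by
            rw [hjab] at h1; omega),
          if_neg (show ¬((a : ℕ) + 1 ≤ (j : ℕ) ∧ (j : ℕ) ≤ (b : ℕ)) by rw [hjab] at h1; omega)]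
        ring
      · by_cases h2 : j = b
        · rw [if_neg h1, if_pos h2,
            if_neg (show ¬((a : ℕ) ≤ (j : ℕ) ∧ (j : ℕ) < (b : ℕ)) by rw [hjbb] at h2; omega),
            if_pos (show (a : ℕ) + 1 ≤ (j : ℕ) ∧ (j : ℕ) ≤ (b : ℕ) by
              rw [hjbb] at h2; rw [hjab] at h1; omega)]
          ring
        · rw [if_neg h1, if_neg h2]
          rw [hjab] at h1; rw [hjbb] at h2
          split_ifs with g1 g2 g2 <;> first | ring1 | (exfalso; omega)


lemma step_lemma {n : ℕ} (w₂ u : Equiv.Perm (Fin n)) {a b : Fin n} (hne : a ≠ b)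
    (hinv : invCount u < invCount (Equiv.swap a b * u))
    (h : Fin n → ℤ) (hmono : StrictMono h) (χ lam : Fin n → ℚ)
    (hlam : ∀ i, lam i = (h i : ℚ) + (i : ℚ) + χ (w₂ i))
    (hχab : χ (w₂ (u⁻¹ a)) = χ (w₂ (u⁻¹ b))) :
    DomLt (dotAction u lam) (dotAction (Equiv.swap a b * u) lam) := by
  rcases hne.lt_or_gt with hab | hba
  · have hpq := orient u hab hinv
    apply domLt_step u hab lam
    rw [hlam (u⁻¹ b), hlam (u⁻¹ a), hχab]
    have hc : (h (u⁻¹ a) : ℚ) < (h (u⁻¹ b) : ℚ) := by exact_mod_cast hmono hpq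
    linarith
  · rw [Equiv.swap_comm]
    rw [Equiv.swap_comm] at hinv
    have hpq := orient u hba hinv
    apply domLt_step u hba lam
    rw [hlam (u⁻¹ a), hlam (u⁻¹ b), hχab]
    have hc : (h (u⁻¹ b) : ℚ) < (h (u⁻¹ a) : ℚ) := by exact_mod_cast hmono hpq
    linarith

/-- For a good pair `(w₁, w₂)`, a strictly increasing `h : Fin n → ℤ`
and `χ : Fin n → ℚ` constant on each orbit of `w₂ w₁⁻¹`, setting
`λ_i = h_i + i - 1 + χ_{w₂ i}` (0-based: `λ_i = h_i + i + χ_{w₂ i}`), the weight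
`w₁ · λ` is strongly linked to `w₂ · λ`. -/
theorem stronglyLinked_of_goodPair {n : ℕ} (hn : 1 ≤ n)
    (w₁ w₂ : Equiv.Perm (Fin n)) (hgood : IsGoodPair w₁ w₂)
    (h : Fin n → ℤ) (hmono : StrictMono h)
    (χ : Fin n → ℚ) (hχ : ∀ a b : Fin n, (w₂ * w₁⁻¹).SameCycle a b → χ a = χ b)
    (lam : Fin n → ℚ) (hlam : ∀ i, lam i = (h i : ℚ) + (i : ℚ) + χ (w₂ i)) :
    StronglyLinked (dotAction w₁ lam) (dotAction w₂ lam) := by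
  classical
  obtain ⟨L, hLswap, hLw, hLinv⟩ := hgood
  set g : Equiv.Perm (Fin n) := w₁ * w₂⁻¹ with hg
  have hconv : ∀ x y : Fin n, g.SameCycle x y → (w₂ * w₁⁻¹).SameCycle x y := by
    intro x y hxy
    have hge : w₂ * w₁⁻¹ = g⁻¹ := by rw [hg, mul_inv_rev, inv_inv]
    rw [hge]
    exact Equiv.Perm.sameCycle_inv.mpr hxy
  have hswapprop : ∀ (a' b' : Fin n), g.SameCycle a' b' →
      ∀ x, g.SameCycle x (Equiv.swap a' b' x) := by
    intro a' b' hs x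
    rcases eq_or_ne x a' with rfl | hxa
    · rw [Equiv.swap_apply_left]; exact hs
    rcases eq_or_ne x b' with rfl | hxb
    · rw [Equiv.swap_apply_right]; exact hs.symm
    · rw [Equiv.swap_apply_of_ne_of_ne hxa hxb]
  have hginv : ∀ y : Fin n, g.SameCycle (g⁻¹ y) y := fun y => ⟨1, by simp⟩
  have hinvol : ∀ τ ∈ L, τ * τ = 1 := by
    intro τ hτ
    obtain ⟨a, b, _, rfl, _⟩ := hLswap τ hτ
    exact Equiv.swap_mul_self a b
  have hDrop : ∀ m : ℕ, (L.drop m).prod * w₂ = (L.take m).reverse.prod * w₁ := by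
    intro m
    conv_lhs => rw [hLw]
    have hsplit : L.reverse.prod = (L.drop m).reverse.prod * (L.take m).reverse.prod := by
      conv_lhs => rw [← List.take_append_drop m L]
      rw [List.reverse_append, List.prod_append]
    rw [hsplit, ← mul_assoc, ← mul_assoc,
      prod_mul_reverse_prod (L.drop m) (fun τ hτ => hinvol τ (List.mem_of_mem_drop hτ)),
      one_mul]
  refine ⟨L.reverse, ?_, ?_, ?_⟩
  · intro τ hτ
    obtain ⟨a, b, hne, heq, _⟩ := hLswap τ (List.mem_reverse.mp hτ)
    exact ⟨a, b, hne, heq⟩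
  · rw [List.reverse_reverse, ← dotAction_mul]
    congr 1
    rw [hLw, ← mul_assoc, prod_mul_reverse_prod L hinvol, one_mul]
  · intro k hk
    rw [List.length_reverse] at hk
    have hrw : ∀ i : ℕ,
        dotAction ((L.reverse.take i).reverse.prod) (dotAction w₂ lam) =
        dotAction ((L.take (L.length - i)).reverse.prod * w₁) lam := by
      intro i
      rw [← dotAction_mul]
      congr 1
      rw [List.take_reverse, List.reverse_reverse, hDrop]
    rw [hrw k, hrw (k + 1)]
    set j := L.length - (k + 1) with hjdef
    have hjlt : j < L.length := by omega
    have hjk : L.length - k = j + 1 := by omega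
    rw [hjk]
    set P : Equiv.Perm (Fin n) := (L.take j).reverse.prod with hP
    set u : Equiv.Perm (Fin n) := P * w₁ with hu
    obtain ⟨a, b, hne, hτeq, hsc⟩ := hLswap (L[j]'hjlt) (List.getElem_mem hjlt)
    have htake : (L.take (j + 1)).reverse.prod = Equiv.swap a b * P := by
      rw [← List.take_concat_get hjlt, List.concat_eq_append, List.reverse_append]
      simp [hτeq, hP]
    have hstep : (L.take (j + 1)).reverse.prod * w₁ = Equiv.swap a b * u := by
      rw [htake, mul_assoc, hu]
    rw [hstep]
    have hinvj := hLinv j hjlt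
    rw [hstep, ← hu] at hinvj
    -- χ equality on w₂ ∘ u⁻¹ of a, b
    have hPprop : ∀ x, g.SameCycle x (P x) := by
      apply sameCycle_list_prod
      intro τ' hτ'
      have hτ'L : τ' ∈ L := List.mem_of_mem_take (List.mem_reverse.mp hτ')
      obtain ⟨a', b', _, rfl, hsc'⟩ := hLswap τ' hτ'L
      exact hswapprop a' b' hsc'
    have hPinv : ∀ x, g.SameCycle x (P⁻¹ x) := sameCycle_inv_apply g P hPprop
    have he : ∀ x, w₂ (u⁻¹ x) = g⁻¹ (P⁻¹ x) := by
      intro x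
      rw [hu, mul_inv_rev, hg, mul_inv_rev, inv_inv]
      rfl
    have hkey : g.SameCycle (w₂ (u⁻¹ a)) (w₂ (u⁻¹ b)) := by
      rw [he a, he b]
      exact (hginv (P⁻¹ a)).trans
        ((hPinv a).symm.trans (hsc.trans ((hPinv b).trans (hginv (P⁻¹ b)).symm)))
    have hχab : χ (w₂ (u⁻¹ a)) = χ (w₂ (u⁻¹ b)) := hχ _ _ (hconv _ _ hkey)
    exact step_lemma w₂ u hne hinvj h hmono χ lam hlam hχab
end

section
/- Let w_1, w_2 ∈ S_4 be the permutations of {1, 2, 3, 4} given in one-line notation by w_1 = 1324 (the transposition (2 3)) and w_2 = 4231 (the transposition (1 4)). Then w_1 ⪯ w_2 in the Bruhat order, but (w_1, w_2) is not a good pair. -/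
open Finset

/-- Bruhat order: `w₁ ⪯ w₂` iff `w₂ = τ_r ⋯ τ_1 w₁` for transpositions `τ_k` with the
number of inversions strictly increasing along the partial products. -/
def BruhatLe {n : ℕ} (w₁ w₂ : Equiv.Perm (Fin n)) : Prop :=
  ∃ l : List (Equiv.Perm (Fin n)),
    (∀ τ ∈ l, ∃ a b : Fin n, a ≠ b ∧ τ = Equiv.swap a b) ∧
    w₂ = l.reverse.prod * w₁ ∧
    ∀ k < l.length,
      invCount ((l.take k).reverse.prod * w₁) < invCount ((l.take (k + 1)).reverse.prod * w₁)

/-!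
The orbits of `w₁ w₂⁻¹ = (2 3)(1 4)` are `{1, 4}` and `{2, 3}`, so a good chain may only use
`(1 4)` and `(2 3)`, and every partial product lies in the Klein group they generate, whose
elements `id, (2 3), (1 4), (1 4)(2 3)` have `0, 1, 5, 6` inversions. Starting from `(2 3)`,
the only step raising the inversion number leads to `(1 4)(2 3)`, from which no step raises it;
so `(1 4)` is never reached. The Bruhat relation is witnessed by the chain
`1324 → 2314 → 2341 → 3241 → 4231`.
-/

theorem List.take_succ_reverse_prod {M : Type*} [Monoid M] (l : List M) {k : ℕ}
    (hk : k < l.length) : (l.take (k + 1)).reverse.prod = l[k] * (l.take k).reverse.prod := by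
  rw [List.take_add_one, List.getElem?_eq_getElem hk, Option.toList_some, List.reverse_append,
    List.reverse_singleton, List.singleton_append, List.prod_cons]

theorem List.reverse_prod_mul_of_increasing_chain {M α : Type*} [Monoid M] [LT α]
    (f : M → α) (P : M → Prop) (l : List M) {w : M} (hw : P w)
    (hstep : ∀ τ ∈ l, ∀ u, P u → f u < f (τ * u) → P (τ * u))
    (hmono : ∀ k < l.length,
      f ((l.take k).reverse.prod * w) < f ((l.take (k + 1)).reverse.prod * w)) :
    P (l.reverse.prod * w) := by
  have partial_products : ∀ k ≤ l.length, P ((l.take k).reverse.prod * w) := by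
    intro k hk
    induction k with
    | zero => simpa using hw
    | succ k ih =>
      have hk' : k < l.length := hk
      have hinc := hmono k hk'
      rw [l.take_succ_reverse_prod hk', mul_assoc] at hinc ⊢
      exact hstep _ (l.getElem_mem hk') _ (ih hk'.le) hinc
  simpa using partial_products l.length le_rfl

theorem swap_eq_of_sameCycle_swap_one_two_mul_swap_zero_three {a b : Fin 4} (hab : a ≠ b)
    (h : (Equiv.swap (1 : Fin 4) 2 * (Equiv.swap (0 : Fin 4) 3)⁻¹).SameCycle a b) :
    Equiv.swap a b = Equiv.swap 1 2 ∨ Equiv.swap a b = Equiv.swap 0 3 := by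
  revert a b; decide

/-- In `S₄`, the permutations `w₁ = 1324` (the transposition `(2 3)`,
0-based `swap 1 2`) and `w₂ = 4231` (the transposition `(1 4)`, 0-based `swap 0 3`)
satisfy `w₁ ⪯ w₂` in the Bruhat order, but `(w₁, w₂)` is not a good pair. -/
theorem not_goodPair_1324_4231 :
    BruhatLe (Equiv.swap (1 : Fin 4) 2) (Equiv.swap (0 : Fin 4) 3) ∧
      ¬ IsGoodPair (Equiv.swap (1 : Fin 4) 2) (Equiv.swap (0 : Fin 4) 3) := by
  refine ⟨⟨[Equiv.swap 0 1, Equiv.swap 0 3, Equiv.swap 1 2, Equiv.swap 2 3], ?_, by decide,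
    by decide⟩, ?_⟩
  · simp only [List.mem_cons, List.not_mem_nil, or_false]
    rintro τ (rfl | rfl | rfl | rfl) <;> exact ⟨_, _, by decide, rfl⟩
  · rintro ⟨l, hswaps, hw, hmono⟩
    let reachable : Equiv.Perm (Fin 4) → Prop := fun u ↦
      u = Equiv.swap 1 2 ∨ u = Equiv.swap 0 3 * Equiv.swap 1 2
    have hend : reachable (l.reverse.prod * Equiv.swap 1 2) := by
      refine l.reverse_prod_mul_of_increasing_chain invCount reachable (Or.inl rfl) ?_ hmono
      intro τ hτ u hu hinc
      obtain ⟨a, b, hab, rfl, hcycle⟩ := hswaps τ hτ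
      revert hinc
      rcases swap_eq_of_sameCycle_swap_one_two_mul_swap_zero_three hab hcycle with h | h <;>
        rw [h] <;> rcases hu with rfl | rfl <;> decide
    rw [← hw] at hend
    revert hend; decide
end

section
/- For every n ≤ 3 and all permutations w_1, w_2 of {1, …, n} with w_1 ⪯ w_2 in the Bruhat order, the pair (w_1, w_2) is good. Moreover, for all permutations w_1, w_2 of {1, 2, 3, 4} with w_1 ⪯ w_2 in the Bruhat order, the pair (w_1, w_2) is good unless w_1 = 1324 and w_2 = 4231 in one-line notation. -/
open Finset

def reachAux {n : ℕ} (L : List (Equiv.Perm (Fin n))) (w₂ : Equiv.Perm (Fin n)) :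
    ℕ → Equiv.Perm (Fin n) → Bool
  | 0, v => decide (v = w₂)
  | (f+1), v => decide (v = w₂) ||
      L.any fun τ => (decide (invCount v < invCount (τ * v)) &&
        decide (invCount (τ * v) ≤ invCount w₂)) && reachAux L w₂ f (τ * v)

def allSwaps (n : ℕ) : List (Equiv.Perm (Fin n)) :=
  (List.finRange n).flatMap fun a =>
    ((List.finRange n).filter fun b => decide (a < b)).map fun b => Equiv.swap a b

def goodSwaps {n : ℕ} (c : Equiv.Perm (Fin n)) : List (Equiv.Perm (Fin n)) :=
  (List.finRange n).flatMap fun a =>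
    ((List.finRange n).filter fun b => decide (a < b ∧ c.SameCycle a b)).map
      fun b => Equiv.swap a b

lemma mem_allSwaps {n : ℕ} {a b : Fin n} (h : a ≠ b) : Equiv.swap a b ∈ allSwaps n := by
  rcases Ne.lt_or_gt h with hlt | hlt
  · simp only [allSwaps, List.mem_flatMap, List.mem_map, List.mem_filter, List.mem_finRange,
      true_and, decide_eq_true_eq]
    exact ⟨a, b, hlt, rfl⟩
  · rw [Equiv.swap_comm]
    simp only [allSwaps, List.mem_flatMap, List.mem_map, List.mem_filter, List.mem_finRange,
      true_and, decide_eq_true_eq]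
    exact ⟨b, a, hlt, rfl⟩

lemma mem_goodSwaps {n : ℕ} {c : Equiv.Perm (Fin n)} {τ : Equiv.Perm (Fin n)}
    (h : τ ∈ goodSwaps c) : ∃ a b : Fin n, a ≠ b ∧ τ = Equiv.swap a b ∧ c.SameCycle a b := by
  simp only [goodSwaps, List.mem_flatMap, List.mem_map, List.mem_filter, List.mem_finRange,
    true_and, decide_eq_true_eq] at h
  obtain ⟨a, b, ⟨hab, hc⟩, rfl⟩ := h
  exact ⟨a, b, ne_of_lt hab, rfl, hc⟩

lemma take_succ_prod {n : ℕ} (τ : Equiv.Perm (Fin n)) (l : List (Equiv.Perm (Fin n)))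
    (v : Equiv.Perm (Fin n)) (k : ℕ) :
    ((τ :: l).take (k + 1)).reverse.prod * v = ((l.take k).reverse.prod) * (τ * v) := by
  simp [List.take_succ_cons, List.prod_append, mul_assoc]

lemma chain_cons {n : ℕ} (τ : Equiv.Perm (Fin n)) (l' : List (Equiv.Perm (Fin n)))
    (v : Equiv.Perm (Fin n))
    (h0 : invCount v < invCount (τ * v))
    (h' : ∀ k < l'.length,
      invCount ((l'.take k).reverse.prod * (τ * v)) <
        invCount ((l'.take (k + 1)).reverse.prod * (τ * v))) :
    ∀ k < (τ :: l').length,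
      invCount (((τ :: l').take k).reverse.prod * v) <
        invCount (((τ :: l').take (k + 1)).reverse.prod * v) := by
  intro k hk
  cases k with
  | zero => simpa [take_succ_prod] using h0
  | succ k =>
      rw [take_succ_prod, take_succ_prod]
      exact h' k (by simpa using hk)

lemma chain_of_cons {n : ℕ} (τ : Equiv.Perm (Fin n)) (l' : List (Equiv.Perm (Fin n)))
    (v : Equiv.Perm (Fin n))
    (h : ∀ k < (τ :: l').length,
      invCount (((τ :: l').take k).reverse.prod * v) <
        invCount (((τ :: l').take (k + 1)).reverse.prod * v)) :
    invCount v < invCount (τ * v) ∧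
    ∀ k < l'.length,
      invCount ((l'.take k).reverse.prod * (τ * v)) <
        invCount ((l'.take (k + 1)).reverse.prod * (τ * v)) := by
  constructor
  · have := h 0 (by simp)
    simpa [take_succ_prod] using this
  · intro k hk
    have := h (k + 1) (by simpa using Nat.succ_lt_succ hk)
    rwa [take_succ_prod, take_succ_prod] at this

/-- Along an increasing chain, the inversion count of the start is at most that of the end. -/
lemma chain_start_le {n : ℕ} (l : List (Equiv.Perm (Fin n))) (w₁ w₂ : Equiv.Perm (Fin n))
    (hprod : w₂ = l.reverse.prod * w₁)
    (hchain : ∀ k < l.length,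
      invCount ((l.take k).reverse.prod * w₁) < invCount ((l.take (k + 1)).reverse.prod * w₁)) :
    invCount w₁ ≤ invCount w₂ := by
  have key : ∀ k ≤ l.length, invCount w₁ ≤ invCount ((l.take k).reverse.prod * w₁) := by
    intro k
    induction k with
    | zero => intro _; simp
    | succ k ih =>
        intro hk
        have h1 := ih (Nat.le_of_succ_le hk)
        have h2 := hchain k (Nat.lt_of_succ_le hk)
        omega
  have := key l.length le_rfl
  rw [List.take_length] at this
  rwa [hprod]

/-- Soundness of the search. -/
lemma reach_sound {n : ℕ} (Q : Equiv.Perm (Fin n) → Prop) (L : List (Equiv.Perm (Fin n)))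
    (hL : ∀ τ ∈ L, Q τ) (w₂ : Equiv.Perm (Fin n)) :
    ∀ (f : ℕ) (v : Equiv.Perm (Fin n)), reachAux L w₂ f v = true →
      ∃ l : List (Equiv.Perm (Fin n)),
        (∀ τ ∈ l, Q τ) ∧ w₂ = l.reverse.prod * v ∧
        ∀ k < l.length,
          invCount ((l.take k).reverse.prod * v) < invCount ((l.take (k + 1)).reverse.prod * v) := by
  intro f
  induction f with
  | zero =>
      intro v h
      rw [reachAux] at h
      have : v = w₂ := of_decide_eq_true h
      exact ⟨[], by simp, by simp [this], by simp⟩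
  | succ f ih =>
      intro v h
      rw [reachAux] at h
      rcases Bool.or_eq_true_iff.mp h with h | h
      · have : v = w₂ := of_decide_eq_true h
        exact ⟨[], by simp, by simp [this], by simp⟩
      · rcases List.any_eq_true.mp h with ⟨τ, hτL, hτ⟩
        rcases Bool.and_eq_true_iff.mp hτ with ⟨hinv, hrec⟩
        rcases Bool.and_eq_true_iff.mp hinv with ⟨hinc, _⟩
        have hinv' : invCount v < invCount (τ * v) := of_decide_eq_true hinc
        obtain ⟨l', hQ', hprod', hchain'⟩ := ih (τ * v) hrec
        refine ⟨τ :: l', ?_, ?_, chain_cons τ l' v hinv' hchain'⟩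
        · intro σ hσ
          rcases List.mem_cons.mp hσ with rfl | hσ
          · exact hL σ hτL
          · exact hQ' σ hσ
        · rw [hprod']; simp [List.prod_append, mul_assoc]

/-- Completeness of the search with the full list of swaps. -/
lemma reach_complete {n : ℕ} (w₂ : Equiv.Perm (Fin n)) :
    ∀ (l : List (Equiv.Perm (Fin n))) (f : ℕ) (w₁ : Equiv.Perm (Fin n)),
      (∀ τ ∈ l, ∃ a b : Fin n, a ≠ b ∧ τ = Equiv.swap a b) →
      w₂ = l.reverse.prod * w₁ →
      (∀ k < l.length,
        invCount ((l.take k).reverse.prod * w₁) < invCount ((l.take (k + 1)).reverse.prod * w₁)) →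
      l.length ≤ f → reachAux (allSwaps n) w₂ f w₁ = true := by
  intro l
  induction l with
  | nil =>
      intro f w₁ _ hprod _ _
      have : w₁ = w₂ := by simpa using hprod.symm
      cases f <;> simp [reachAux, this]
  | cons τ l' ih =>
      intro f w₁ hQ hprod hchain hlen
      cases f with
      | zero => simp at hlen
      | succ f =>
          rw [reachAux]
          apply Bool.or_eq_true_iff.mpr
          right
          apply List.any_eq_true.mpr
          obtain ⟨hinv, hchain'⟩ := chain_of_cons τ l' w₁ hchain
          have hprod' : w₂ = l'.reverse.prod * (τ * w₁) := by
            rw [hprod]; simp [List.prod_append, mul_assoc]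
          obtain ⟨a, b, hab, hτab⟩ := hQ τ (List.mem_cons_self (a := τ) (l := l'))
          refine ⟨τ, hτab ▸ mem_allSwaps hab, ?_⟩
          apply Bool.and_eq_true_iff.mpr
          refine ⟨Bool.and_eq_true_iff.mpr ⟨decide_eq_true hinv,
            decide_eq_true (chain_start_le l' (τ * w₁) w₂ hprod' hchain')⟩, ?_⟩
          exact ih f _ (fun σ hσ => hQ σ (List.mem_cons_of_mem _ hσ)) hprod' hchain'
            (by simpa using Nat.succ_le_succ_iff.mp hlen)

lemma invCount_le {n : ℕ} (u : Equiv.Perm (Fin n)) : invCount u ≤ n * n := by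
  calc invCount u ≤ (Finset.univ : Finset (Fin n × Fin n)).card := Finset.card_filter_le _ _
  _ = n * n := by simp [Finset.card_univ]

lemma chain_length_le {n : ℕ} (l : List (Equiv.Perm (Fin n))) (w₁ w₂ : Equiv.Perm (Fin n))
    (hprod : w₂ = l.reverse.prod * w₁)
    (hchain : ∀ k < l.length,
      invCount ((l.take k).reverse.prod * w₁) < invCount ((l.take (k + 1)).reverse.prod * w₁)) :
    l.length ≤ n * n := by
  have key : ∀ k ≤ l.length, k ≤ invCount ((l.take k).reverse.prod * w₁) := by
    intro k
    induction k with
    | zero => intro _; exact Nat.zero_le _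
    | succ k ih =>
        intro hk
        have h1 := ih (Nat.le_of_succ_le hk)
        have h2 := hchain k (Nat.lt_of_succ_le hk)
        omega
  have := key l.length le_rfl
  rw [List.take_length] at this
  calc l.length ≤ invCount (l.reverse.prod * w₁) := this
  _ ≤ n * n := invCount_le _

set_option maxRecDepth 1000000 in
set_option maxHeartbeats 2000000 in
lemma key0 : ∀ w₁ w₂ : Equiv.Perm (Fin 0), reachAux (allSwaps 0) w₂ 16 w₁ = true →
    reachAux (goodSwaps (w₁ * w₂⁻¹)) w₂ 16 w₁ = true := by decide

set_option maxRecDepth 1000000 in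
set_option maxHeartbeats 2000000 in
lemma key1 : ∀ w₁ w₂ : Equiv.Perm (Fin 1), reachAux (allSwaps 1) w₂ 16 w₁ = true →
    reachAux (goodSwaps (w₁ * w₂⁻¹)) w₂ 16 w₁ = true := by decide

set_option maxRecDepth 1000000 in
set_option maxHeartbeats 4000000 in
lemma key2 : ∀ w₁ w₂ : Equiv.Perm (Fin 2), reachAux (allSwaps 2) w₂ 16 w₁ = true →
    reachAux (goodSwaps (w₁ * w₂⁻¹)) w₂ 16 w₁ = true := by decide

set_option maxRecDepth 1000000 in
set_option maxHeartbeats 8000000 in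
lemma key3 : ∀ w₁ w₂ : Equiv.Perm (Fin 3), reachAux (allSwaps 3) w₂ 16 w₁ = true →
    reachAux (goodSwaps (w₁ * w₂⁻¹)) w₂ 16 w₁ = true := by decide

set_option maxRecDepth 1000000 in
set_option maxHeartbeats 40000000 in
lemma key4 : ∀ w₁ w₂ : Equiv.Perm (Fin 4), reachAux (allSwaps 4) w₂ 16 w₁ = true →
    ¬(w₁ = Equiv.swap (1 : Fin 4) 2 ∧ w₂ = Equiv.swap (0 : Fin 4) 3) →
    reachAux (goodSwaps (w₁ * w₂⁻¹)) w₂ 16 w₁ = true := by decide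

/-- For `n ≤ 3` every Bruhat-comparable pair of permutations of
`{1, …, n}` is good; for `n = 4` every Bruhat-comparable pair is good except
`(w₁, w₂) = (1324, 4231)` (0-based: `(swap 1 2, swap 0 3)`). -/
theorem goodPair_small_rank :
    (∀ n : ℕ, n ≤ 3 → ∀ w₁ w₂ : Equiv.Perm (Fin n), BruhatLe w₁ w₂ → IsGoodPair w₁ w₂) ∧
      ∀ w₁ w₂ : Equiv.Perm (Fin 4), BruhatLe w₁ w₂ →
        ¬(w₁ = Equiv.swap (1 : Fin 4) 2 ∧ w₂ = Equiv.swap (0 : Fin 4) 3) →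
        IsGoodPair w₁ w₂ := by
  have sound : ∀ {n : ℕ} (w₁ w₂ : Equiv.Perm (Fin n)),
      reachAux (goodSwaps (w₁ * w₂⁻¹)) w₂ 16 w₁ = true → IsGoodPair w₁ w₂ := by
    intro n w₁ w₂ h
    exact reach_sound
      (fun τ => ∃ a b : Fin n, a ≠ b ∧ τ = Equiv.swap a b ∧ (w₁ * w₂⁻¹).SameCycle a b)
      (goodSwaps (w₁ * w₂⁻¹)) (fun τ hτ => mem_goodSwaps hτ) w₂ 16 w₁ h
  have compl : ∀ {n : ℕ}, n ≤ 4 → ∀ (w₁ w₂ : Equiv.Perm (Fin n)), BruhatLe w₁ w₂ →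
      reachAux (allSwaps n) w₂ 16 w₁ = true := by
    intro n hn w₁ w₂ hB
    obtain ⟨l, hQ, hprod, hchain⟩ := hB
    have hlen : l.length ≤ 16 := by
      have := chain_length_le l w₁ w₂ hprod hchain
      nlinarith
    exact reach_complete w₂ l 16 w₁ hQ hprod hchain hlen
  constructor
  · intro n hn w₁ w₂ hB
    have hr := compl (le_trans hn (by norm_num)) w₁ w₂ hB
    interval_cases n
    · exact sound w₁ w₂ (key0 w₁ w₂ hr)
    · exact sound w₁ w₂ (key1 w₁ w₂ hr)
    · exact sound w₁ w₂ (key2 w₁ w₂ hr)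
    · exact sound w₁ w₂ (key3 w₁ w₂ hr)
  · intro w₁ w₂ hB hexc
    have hr := compl (by norm_num) w₁ w₂ hB
    exact sound w₁ w₂ (key4 w₁ w₂ hr hexc)
end
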